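/- arXiv:2507.04445 — 12 statements merged into one kernel-verified Lean document; each statement's English description precedes it below -/
import Mathlib

section
/- For every n ∈ ℕ and every subset A of (ℕ∞)^n, where ℕ∞ = ℕ ∪ {ℵ₀} is ordered with ℵ₀ above every natural number and tuples are ordered componentwise ((p₁,…,pₙ) ≤ (q₁,…,qₙ) iff pᵢ ≤ qᵢ for all 1 ≤ i ≤ n), the set of maximal elements of A with respect to this order is finite. -/
theorem finite_setOfPred_maximal {α : Type*} [PartialOrder α] [WellQuasiOrderedLE α]
    (P : α → Prop) : {a | Maximal P a}.Finite :=
  (setOfPred_maximal_antichain P).finite_of_wellQuasiOrdered wellQuasiOrdered_le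

/-- Dickson-type lemma: for every `n` and every subset `A` of `(ℕ∞)ⁿ` (ordered
componentwise, with `ℵ₀ = ⊤` above every natural number), the set of maximal elements
of `A` is finite. -/
theorem stmt_0 (n : ℕ) (A : Set (Fin n → ℕ∞)) :
    {a : Fin n → ℕ∞ | Maximal (· ∈ A) a}.Finite :=
  -- `ℕ∞` is well-ordered, hence a WQO, and finite products of WQOs are WQOs (Dickson).
  finite_setOfPred_maximal _
end

section
/- For each i ∈ {1, 2}, the theory T_i is stably infinite: every quantifier-free Σ_f-formula that is satisfiable in some model of T_i is satisfiable in some model of T_i with infinite domain. -/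
open FirstOrder FirstOrder.Language

/-- The signature Σ_f with a single unary function symbol `f`. -/
def Lf : FirstOrder.Language :=
  ⟨fun n => match n with | 1 => Unit | _ => Empty, fun _ => Empty⟩

/-- The unary function symbol of `Lf`. -/
def fSymb : Lf.Functions 1 := Unit.unit

/-- The interpretation of the function symbol `f` in an `Lf`-structure. -/
def fFun (M : Type) (inst : Lf.Structure M) : M → M :=
  fun a => inst.funMap fSymb ![a]

/-- Realization of a formula, with the structure instance given explicitly. -/
def RealizeF {α : Type} (M : Type) (inst : Lf.Structure M) (φ : Lf.Formula α) (v : α → M) : Prop :=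
  letI := inst
  φ.Realize v

/-- The semantic content of the formula `cycle_n(x)`:
`f^n(x) = x ∧ ⋀_{m ∣ n, m ≠ n, m ≥ 1} f^m(x) ≠ x`. -/
def cycleProp (M : Type) (inst : Lf.Structure M) (n : ℕ) (a : M) : Prop :=
  (fFun M inst)^[n] a = a ∧
    ∀ m : ℕ, m ∣ n → m ≠ n → 1 ≤ m → (fFun M inst)^[m] a ≠ a

/-- `M` is a model of T₁, axiomatized by `{(∃x. cycle_n(x)) → ∀x. f²(x) ≠ x : n ∈ S}`. -/
def ModelT1 (S : Set ℕ) (M : Type) (inst : Lf.Structure M) : Prop :=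
  ∀ n ∈ S, (∃ a : M, cycleProp M inst n a) → ∀ a : M, fFun M inst (fFun M inst a) ≠ a

/-- `M` is a model of T₂, axiomatized by `Ax(T₁) ∪ {¬∃x. cycle₆(x)}`. -/
def ModelT2 (S : Set ℕ) (M : Type) (inst : Lf.Structure M) : Prop :=
  ModelT1 S M inst ∧ ¬ ∃ a : M, cycleProp M inst 6 a

/-- A theory (given as a class of models) is stably infinite if every quantifier-free
formula satisfiable in some model is satisfiable in some model with infinite domain. -/
def StablyInfiniteF (Mod : ∀ (M : Type), Lf.Structure M → Prop) : Prop :=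
  ∀ (α : Type) (φ : Lf.Formula α), φ.IsQF →
    (∃ (M : Type) (inst : Lf.Structure M), Mod M inst ∧ ∃ v : α → M, RealizeF M inst φ v) →
    ∃ (M : Type) (inst : Lf.Structure M),
      Mod M inst ∧ Infinite M ∧ ∃ v : α → M, RealizeF M inst φ v

def extFun (M : Type) (inst : Lf.Structure M) : M ⊕ ℕ → M ⊕ ℕ
  | .inl a => .inl (fFun M inst a)
  | .inr n => .inr (n+1)

def extStruct (M : Type) (inst : Lf.Structure M) : Lf.Structure (M ⊕ ℕ) where
  funMap {n} := match n with
    | 1 => fun _ x => extFun M inst (x 0)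
    | 0 => fun e _ => e.elim
    | (_+2) => fun e _ => e.elim
  RelMap {n} := fun e => e.elim

example (M : Type) (inst : Lf.Structure M) (a : M ⊕ ℕ) :
    fFun (M ⊕ ℕ) (extStruct M inst) a = extFun M inst a := rfl

def extEmb (M : Type) (inst : Lf.Structure M) :
    @Language.Embedding Lf M (M ⊕ ℕ) inst (extStruct M inst) :=
  letI := inst; letI := extStruct M inst
  { toFun := Sum.inl
    inj' := Sum.inl_injective
    map_fun' := by
      intro n f x
      match n, f with
      | 1, f =>
        have hx : x = ![x 0] := funext (fun i => by fin_cases i <;> rfl)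
        show Sum.inl (inst.funMap f x) = extFun M inst (Sum.inl (x 0))
        rw [hx]; rfl
    map_rel' := by intro n r; exact r.elim }

lemma extFun_iter_inl (M : Type) (inst : Lf.Structure M) (n : ℕ) (a : M) :
    (extFun M inst)^[n] (Sum.inl a) = Sum.inl ((fFun M inst)^[n] a) := by
  induction n with
  | zero => rfl
  | succ k ih => rw [Function.iterate_succ_apply', Function.iterate_succ_apply', ih]; rfl

lemma extFun_iter_inr (M : Type) (inst : Lf.Structure M) (n k : ℕ) :
    (extFun M inst)^[n] (Sum.inr k) = Sum.inr (k + n) := by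
  induction n with
  | zero => rfl
  | succ m ih => rw [Function.iterate_succ_apply', ih]; rfl

lemma cycleProp_ext (M : Type) (inst : Lf.Structure M) (n : ℕ) (hn : 1 ≤ n) (a : M ⊕ ℕ) :
    cycleProp (M ⊕ ℕ) (extStruct M inst) n a ↔ ∃ b : M, a = Sum.inl b ∧ cycleProp M inst n b := by
  have hf : fFun (M ⊕ ℕ) (extStruct M inst) = extFun M inst := rfl
  cases a with
  | inl b =>
    simp only [cycleProp, hf]
    constructor
    · rintro ⟨h1, h2⟩
      refine ⟨b, rfl, ?_, ?_⟩
      · have := h1; rw [extFun_iter_inl] at this; exact Sum.inl_injective this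
      · intro m hm hmn hm1 hc
        exact h2 m hm hmn hm1 (by rw [extFun_iter_inl, hc])
    · rintro ⟨c, hc, h1, h2⟩
      obtain rfl : b = c := Sum.inl_injective hc
      refine ⟨by rw [extFun_iter_inl, h1], ?_⟩
      intro m hm hmn hm1 h
      rw [extFun_iter_inl] at h
      exact h2 m hm hmn hm1 (Sum.inl_injective h)
  | inr k =>
    simp only [cycleProp, hf]
    constructor
    · rintro ⟨h1, -⟩
      rw [extFun_iter_inr] at h1
      exact absurd (Sum.inr_injective h1) (by omega)
    · rintro ⟨b, hb, -⟩; exact absurd hb (by simp)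


lemma modelT1_ext (S : Set ℕ) (hS : ∀ n ∈ S, n.Prime ∧ 7 ≤ n) (M : Type)
    (inst : Lf.Structure M) (h : ModelT1 S M inst) : ModelT1 S (M ⊕ ℕ) (extStruct M inst) := by
  rintro n hn ⟨a, ha⟩ b
  have hn1 : 1 ≤ n := le_trans (by norm_num) (hS n hn).2
  rw [cycleProp_ext M inst n hn1] at ha
  obtain ⟨c, -, hc⟩ := ha
  have hM := h n hn ⟨c, hc⟩
  have hf : fFun (M ⊕ ℕ) (extStruct M inst) = extFun M inst := rfl
  rw [hf]
  cases b with
  | inl b =>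
    intro hcon
    exact hM b (Sum.inl_injective hcon)
  | inr k =>
    show Sum.inr (k + 2) ≠ Sum.inr k
    simp

lemma modelT2_ext (S : Set ℕ) (hS : ∀ n ∈ S, n.Prime ∧ 7 ≤ n) (M : Type)
    (inst : Lf.Structure M) (h : ModelT2 S M inst) : ModelT2 S (M ⊕ ℕ) (extStruct M inst) := by
  refine ⟨modelT1_ext S hS M inst h.1, ?_⟩
  rintro ⟨a, ha⟩
  rw [cycleProp_ext M inst 6 (by norm_num)] at ha
  obtain ⟨b, -, hb⟩ := ha
  exact h.2 ⟨b, hb⟩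

lemma stably_of_ext (Mod : ∀ M : Type, Lf.Structure M → Prop)
    (hext : ∀ M inst, Mod M inst → Mod (M ⊕ ℕ) (extStruct M inst)) :
    StablyInfiniteF Mod := by
  rintro α φ hQF ⟨M, inst, hMod, v, hv⟩
  refine ⟨M ⊕ ℕ, extStruct M inst, hext M inst hMod, inferInstance, Sum.inl ∘ v, ?_⟩
  letI := inst; letI := extStruct M inst
  have h := (BoundedFormula.IsQF.realize_embedding hQF (extEmb M inst)
    (v := v) (xs := default)).mpr hv
  have e1 : (⇑(extEmb M inst)) ∘ v = Sum.inl ∘ v := rfl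
  have e2 : (⇑(extEmb M inst)) ∘ (default : Fin 0 → M) = default := Subsingleton.elim _ _
  rw [e1, e2] at h
  unfold RealizeF Formula.Realize
  convert h using 2

/-- For i ∈ {1, 2}, the theory T_i is stably infinite. -/
theorem stmt_1 (S : Set ℕ) (hS : ∀ n ∈ S, n.Prime ∧ 7 ≤ n) :
    StablyInfiniteF (ModelT1 S) ∧ StablyInfiniteF (ModelT2 S) := by
  exact ⟨stably_of_ext _ (modelT1_ext S hS), stably_of_ext _ (modelT2_ext S hS)⟩
end

section
/- For each i ∈ {3, 4}, the theory T_i is not stably infinite. Specifically, the formula f(x) = x is satisfiable in a model of T_i, but every model of T_i with a valuation satisfying f(x) = x has a one-element domain. -/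
open FirstOrder FirstOrder.Language

/-- `M` is a model of T₃, axiomatized by `Ax(T₁) ∪ {(∃x. f(x) = x) → ∀x∀y. x = y}`. -/
def ModelT3 (S : Set ℕ) (M : Type) (inst : Lf.Structure M) : Prop :=
  ModelT1 S M inst ∧ ((∃ a : M, fFun M inst a = a) → ∀ a b : M, a = b)

/-- `M` is a model of T₄, axiomatized by `Ax(T₂) ∪ Ax(T₃)`. -/
def ModelT4 (S : Set ℕ) (M : Type) (inst : Lf.Structure M) : Prop :=
  ModelT2 S M inst ∧ ModelT3 S M inst

/-- The formula `f(x) = x` is satisfiable in a model of the theory, but every model of the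
theory with a valuation satisfying `f(x) = x` has a one-element domain. -/
def NotStablyInfiniteVia (Mod : ∀ (M : Type), Lf.Structure M → Prop) : Prop :=
  (∃ (M : Type) (inst : Lf.Structure M), Mod M inst ∧ ∃ a : M, fFun M inst a = a) ∧
    ∀ (M : Type) (inst : Lf.Structure M), Mod M inst →
      (∃ a : M, fFun M inst a = a) → ∀ a b : M, a = b

/-- For i ∈ {3, 4}, the theory T_i is not stably infinite: `f(x) = x` is satisfiable in a
model of T_i, but only in models with a one-element domain. -/
theorem stmt_2 (S : Set ℕ) (hS : ∀ n ∈ S, n.Prime ∧ 7 ≤ n) :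
    NotStablyInfiniteVia (ModelT3 S) ∧ NotStablyInfiniteVia (ModelT4 S) := by
  classical
  let inst : Lf.Structure Unit := ⟨fun _ _ => (), fun r _ => Empty.elim r⟩
  have hno : ∀ n, 2 ≤ n → ¬ ∃ a : Unit, cycleProp Unit inst n a := by
    rintro n hn ⟨a, _, h2⟩
    exact h2 1 (one_dvd n) (by omega) le_rfl rfl
  have h1 : ModelT1 S Unit inst := by
    intro n hn hex
    exact absurd hex (hno n (by have := (hS n hn).2; omega))
  have h3 : ModelT3 S Unit inst := ⟨h1, fun _ a b => rfl⟩
  have h4 : ModelT4 S Unit inst :=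
    ⟨⟨h1, hno 6 (by norm_num)⟩, h3⟩
  constructor
  · exact ⟨⟨Unit, inst, h3, ⟨(), rfl⟩⟩,
      fun M i hm hex => hm.2 hex⟩
  · exact ⟨⟨Unit, inst, h4, ⟨(), rfl⟩⟩,
      fun M i hm hex => hm.2.2 hex⟩
end

section
/- For each i ∈ {1, 3}, the theory T_i is convex: for every conjunction φ of Σ_f-literals and all variables x_1,…,x_n, y_1,…,y_n (n ≥ 1), if φ → ⋁_{j=1}^n x_j = y_j holds in every model of T_i under every valuation, then there is some 1 ≤ j ≤ n such that φ → x_j = y_j holds in every model of T_i under every valuation. -/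
open FirstOrder FirstOrder.Language

/-- `φ` is a conjunction of literals (atomic formulas and negated atomic formulas). -/
inductive IsConjLits {α : Type} : Lf.Formula α → Prop
  | atomic (φ : Lf.Formula α) : φ.IsAtomic → IsConjLits φ
  | negAtomic (φ : Lf.Formula α) : φ.IsAtomic → IsConjLits φ.not
  | conj (φ ψ : Lf.Formula α) : IsConjLits φ → IsConjLits ψ → IsConjLits (φ ⊓ ψ)

/-- A class of models is convex if whenever a conjunction of literals entails a finite
disjunction of equalities between variables, it entails one of the equalities. -/
def ConvexF (Mod : ∀ (M : Type), Lf.Structure M → Prop) : Prop :=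
  ∀ (α : Type) (φ : Lf.Formula α), IsConjLits φ →
    ∀ (n : ℕ), 1 ≤ n → ∀ (x y : Fin n → α),
      (∀ (M : Type) (inst : Lf.Structure M), Mod M inst →
        ∀ v : α → M, RealizeF M inst φ v → ∃ j : Fin n, v (x j) = v (y j)) →
      ∃ j : Fin n, ∀ (M : Type) (inst : Lf.Structure M), Mod M inst →
        ∀ v : α → M, RealizeF M inst φ v → v (x j) = v (y j)


section Aux

/-- Product structure on a finite family of `Lf`-structures. -/
def piStruct {n : ℕ} (M : Fin n → Type) (inst : ∀ j, Lf.Structure (M j)) :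
    Lf.Structure (∀ j, M j) where
  funMap := fun {l} F x j => (inst j).funMap F (fun i => x i j)
  RelMap := fun {l} R _ => Empty.elim R

lemma fFun_pi {n : ℕ} (M : Fin n → Type) (inst : ∀ j, Lf.Structure (M j))
    (a : ∀ j, M j) (j : Fin n) :
    fFun (∀ j, M j) (piStruct M inst) a j = fFun (M j) (inst j) (a j) := by
  show (inst j).funMap fSymb (fun i => ![a] i j) = (inst j).funMap fSymb ![a j]
  congr 1
  funext i
  fin_cases i
  rfl

lemma fFun_pi_iter {n : ℕ} (M : Fin n → Type) (inst : ∀ j, Lf.Structure (M j))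
    (m : ℕ) (a : ∀ j, M j) (j : Fin n) :
    (fFun (∀ j, M j) (piStruct M inst))^[m] a j = (fFun (M j) (inst j))^[m] (a j) := by
  induction m generalizing a with
  | zero => rfl
  | succ m ih =>
    rw [Function.iterate_succ_apply, Function.iterate_succ_apply, ih, fFun_pi]

lemma realize_term_pi {α : Type} {n : ℕ} (M : Fin n → Type) (inst : ∀ j, Lf.Structure (M j))
    (t : Lf.Term α) (v : α → ∀ j, M j) (j : Fin n) :
    (@Term.realize Lf (∀ j, M j) (piStruct M inst) α v t) j
      = @Term.realize Lf (M j) (inst j) α (fun a => v a j) t := by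
  induction t with
  | var a => rfl
  | func F ts ih =>
    show (inst j).funMap F (fun i => (@Term.realize Lf (∀ j, M j) (piStruct M inst) α v (ts i)) j)
        = (inst j).funMap F (fun i => @Term.realize Lf (M j) (inst j) α (fun a => v a j) (ts i))
    exact congrArg _ (funext ih)

lemma realize_term_pi' {α : Type} {n : ℕ} (M : Fin n → Type) (inst : ∀ j, Lf.Structure (M j))
    (t : Lf.Term (α ⊕ Fin 0)) (v : ∀ j, α → M j) (j : Fin n) :
    (@Term.realize Lf (∀ j, M j) (piStruct M inst) _
        (Sum.elim (fun a k => v k a) default) t) j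
      = @Term.realize Lf (M j) (inst j) _ (Sum.elim (v j) default) t := by
  rw [realize_term_pi]
  congr 1
  funext s
  cases s with
  | inl a => rfl
  | inr i => exact Fin.elim0 i

lemma realize_conjLits_pi {α : Type} {n : ℕ} (hn : 1 ≤ n) (M : Fin n → Type)
    (inst : ∀ j, Lf.Structure (M j)) (φ : Lf.Formula α) (hφ : IsConjLits φ)
    (v : ∀ j, α → M j) (hv : ∀ j, RealizeF (M j) (inst j) φ (v j)) :
    RealizeF (∀ j, M j) (piStruct M inst) φ (fun a j => v j a) := by
  induction hφ with
  | atomic ψ hψ =>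
    cases hψ with
    | equal t₁ t₂ =>
      show (@Term.realize Lf (∀ j, M j) (piStruct M inst) _
          (Sum.elim (fun a k => v k a) default) t₁)
        = (@Term.realize Lf (∀ j, M j) (piStruct M inst) _
          (Sum.elim (fun a k => v k a) default) t₂)
      funext j
      rw [realize_term_pi', realize_term_pi']
      exact hv j
    | rel R ts => exact Empty.elim R
  | negAtomic ψ hψ =>
    cases hψ with
    | equal t₁ t₂ =>
      show ¬ ((@Term.realize Lf (∀ j, M j) (piStruct M inst) _
          (Sum.elim (fun a k => v k a) default) t₁)
        = (@Term.realize Lf (∀ j, M j) (piStruct M inst) _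
          (Sum.elim (fun a k => v k a) default) t₂))
      intro heq
      have j0 : Fin n := ⟨0, hn⟩
      have := congrFun heq j0
      rw [realize_term_pi', realize_term_pi'] at this
      exact hv j0 this
    | rel R ts => exact Empty.elim R
  | conj ψ χ _ _ ih1 ih2 =>
    have h1 : ∀ j, RealizeF (M j) (inst j) ψ (v j) := by
      intro j
      have := hv j
      rw [RealizeF] at this ⊢
      rw [Formula.realize_inf] at this
      exact this.1
    have h2 : ∀ j, RealizeF (M j) (inst j) χ (v j) := by
      intro j
      have := hv j
      rw [RealizeF] at this ⊢
      rw [Formula.realize_inf] at this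
      exact this.2
    letI := piStruct M inst
    show (ψ ⊓ χ).Realize (fun a j => v j a)
    rw [Formula.realize_inf]
    exact ⟨ih1 h1, ih2 h2⟩

lemma modelT1_pi (S : Set ℕ) (hS : ∀ n ∈ S, n.Prime ∧ 7 ≤ n) {n : ℕ}
    (M : Fin n → Type) (inst : ∀ j, Lf.Structure (M j))
    (h : ∀ j, ModelT1 S (M j) (inst j)) :
    ModelT1 S (∀ j, M j) (piStruct M inst) := by
  rintro p hp ⟨a, ha1, ha2⟩ x hx
  have hprime := (hS p hp).1
  have h7 := (hS p hp).2
  have h1 : fFun _ (piStruct M inst) a ≠ a := by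
    have := ha2 1 (one_dvd p) (by omega) le_rfl
    simpa using this
  obtain ⟨j, hj⟩ : ∃ j, fFun (M j) (inst j) (a j) ≠ a j := by
    by_contra hc
    push_neg at hc
    exact h1 (funext fun j => (fFun_pi M inst a j).trans (hc j))
  have hcyc : cycleProp (M j) (inst j) p (a j) := by
    constructor
    · rw [← fFun_pi_iter M inst p a j]
      exact congrFun ha1 j
    · intro m hm hmp hm1
      rcases hprime.eq_one_or_self_of_dvd m hm with rfl | rfl
      · simpa using hj
      · exact absurd rfl hmp
  have := h j p hp ⟨a j, hcyc⟩ (x j)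
  apply this
  have := congrFun hx j
  rw [fFun_pi, fFun_pi] at this
  exact this

lemma modelT3_pi (S : Set ℕ) (hS : ∀ n ∈ S, n.Prime ∧ 7 ≤ n) {n : ℕ}
    (M : Fin n → Type) (inst : ∀ j, Lf.Structure (M j))
    (h : ∀ j, ModelT3 S (M j) (inst j)) :
    ModelT3 S (∀ j, M j) (piStruct M inst) := by
  refine ⟨modelT1_pi S hS M inst (fun j => (h j).1), ?_⟩
  rintro ⟨a, ha⟩ x y
  funext j
  have : fFun (M j) (inst j) (a j) = a j := by
    rw [← fFun_pi M inst a j]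
    exact congrFun ha j
  exact (h j).2 ⟨a j, this⟩ (x j) (y j)

lemma convex_of_pi (Mod : ∀ (M : Type), Lf.Structure M → Prop)
    (hMod : ∀ {n : ℕ} (M : Fin n → Type) (inst : ∀ j, Lf.Structure (M j)),
      (∀ j, Mod (M j) (inst j)) → Mod (∀ j, M j) (piStruct M inst)) :
    ConvexF Mod := by
  intro α φ hφ n hn x y hent
  by_contra hcon
  push_neg at hcon
  choose M inst hM v hv hne using hcon
  obtain ⟨j, hj⟩ := hent (∀ j, M j) (piStruct M inst) (hMod M inst hM)
    (fun a j => v j a) (realize_conjLits_pi hn M inst φ hφ v hv)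
  exact hne j (congrFun hj j)

end Aux

/-- For i ∈ {1, 3}, the theory T_i is convex. -/
theorem stmt_3 (S : Set ℕ) (hS : ∀ n ∈ S, n.Prime ∧ 7 ≤ n) :
    ConvexF (ModelT1 S) ∧ ConvexF (ModelT3 S) := by
  exact ⟨convex_of_pi _ (fun M inst h => modelT1_pi S hS M inst h),
    convex_of_pi _ (fun M inst h => modelT3_pi S hS M inst h)⟩
end

section
/- For each i ∈ {2, 4}, the theory T_i is not convex. Specifically, the formula f^6(x) = x → (f^2(x) = x ∨ f^3(x) = x) holds in every model of T_i under every valuation, but neither f^6(x) = x → f^2(x) = x nor f^6(x) = x → f^3(x) = x holds in every model of T_i under every valuation. -/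
open FirstOrder FirstOrder.Language

/-- The witness for non-convexity: `f⁶(x) = x → (f²(x) = x ∨ f³(x) = x)` is valid,
but neither `f⁶(x) = x → f²(x) = x` nor `f⁶(x) = x → f³(x) = x` is valid. -/
def NotConvexVia (Mod : ∀ (M : Type), Lf.Structure M → Prop) : Prop :=
  (∀ (M : Type) (inst : Lf.Structure M), Mod M inst → ∀ a : M,
      (fFun M inst)^[6] a = a → ((fFun M inst)^[2] a = a ∨ (fFun M inst)^[3] a = a)) ∧
  ¬ (∀ (M : Type) (inst : Lf.Structure M), Mod M inst → ∀ a : M,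
      (fFun M inst)^[6] a = a → (fFun M inst)^[2] a = a) ∧
  ¬ (∀ (M : Type) (inst : Lf.Structure M), Mod M inst → ∀ a : M,
      (fFun M inst)^[6] a = a → (fFun M inst)^[3] a = a)

/-- Structure on `ZMod k` with `f = (· + 1)`. -/
def instZ (k : ℕ) : Lf.Structure (ZMod k) where
  funMap {n} s v := match n, s, v with
    | 1, _, v => v 0 + 1
    | 0, s, _ => s.elim
    | (_+2), s, _ => s.elim
  RelMap {_} r := r.elim

lemma fFun_instZ (k : ℕ) (a : ZMod k) : fFun (ZMod k) (instZ k) a = a + 1 := rfl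

lemma iter_instZ (k m : ℕ) (a : ZMod k) :
    (fFun (ZMod k) (instZ k))^[m] a = a + (m : ZMod k) := by
  induction m with
  | zero => simp
  | succ m ih =>
    rw [Function.iterate_succ_apply', ih, fFun_instZ]
    push_cast; ring

lemma modelT1_instZ (S : Set ℕ) (hS : ∀ n ∈ S, n.Prime ∧ 7 ≤ n) (k : ℕ)
    (hk : ∀ n ∈ S, ¬ (k ∣ n)) : ModelT1 S (ZMod k) (instZ k) := by
  intro n hn ⟨a, ha, _⟩ b
  exfalso
  rw [iter_instZ, add_eq_left] at ha
  exact hk n hn ((ZMod.natCast_eq_zero_iff n k).mp ha)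

lemma modelT4_instZ (S : Set ℕ) (hS : ∀ n ∈ S, n.Prime ∧ 7 ≤ n) (k : ℕ)
    (hk : ∀ n ∈ S, ¬ (k ∣ n)) (hk1 : k ≠ 1) (hk6 : ¬ (cycleProp (ZMod k) (instZ k) 6 0)) :
    ModelT4 S (ZMod k) (instZ k) := by
  have h1 := modelT1_instZ S hS k hk
  have h6 : ¬ ∃ a : ZMod k, cycleProp (ZMod k) (instZ k) 6 a := by
    rintro ⟨a, h, h'⟩
    refine hk6 ⟨?_, fun m hm hm' hm1 hc => h' m hm hm' hm1 ?_⟩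
    · rw [iter_instZ] at h ⊢
      simpa using h
    · rw [iter_instZ] at hc ⊢
      simp only [zero_add] at hc
      rw [hc]; ring
  have hfix : ¬ ∃ a : ZMod k, fFun (ZMod k) (instZ k) a = a := by
    rintro ⟨a, ha⟩
    rw [fFun_instZ, add_eq_left] at ha
    have : ((1 : ℕ) : ZMod k) = 0 := by exact_mod_cast ha
    have := (ZMod.natCast_eq_zero_iff 1 k).mp this
    exact hk1 (Nat.eq_one_of_dvd_one this ▸ rfl)
  exact ⟨⟨h1, h6⟩, h1, fun h => absurd h hfix⟩

lemma valid_T2 (S : Set ℕ) (M : Type) (inst : Lf.Structure M)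
    (h : ModelT2 S M inst) (a : M) (h6 : (fFun M inst)^[6] a = a) :
    (fFun M inst)^[2] a = a ∨ (fFun M inst)^[3] a = a := by
  set g := fFun M inst
  have hp : Function.IsPeriodicPt g 6 a := h6
  set d := Function.minimalPeriod g a with hd
  have hdvd : d ∣ 6 := Function.IsPeriodicPt.minimalPeriod_dvd hp
  have hpos : 0 < d := Function.IsPeriodicPt.minimalPeriod_pos (by norm_num) hp
  have hd6 : d ≠ 6 := by
    intro hD
    refine h.2 ⟨a, ?_, fun m hm hm' hm1 hc => ?_⟩
    · exact h6
    · have : d ≤ m := Function.IsPeriodicPt.minimalPeriod_le (by omega) hc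
      have hmle : m ≤ 6 := Nat.le_of_dvd (by norm_num) hm
      interval_cases m <;> omega
  have hd' : d ∣ 2 ∨ d ∣ 3 := by
    have hle : d ≤ 6 := Nat.le_of_dvd (by norm_num) hdvd
    interval_cases d <;> revert hdvd hd6 <;> decide
  rcases hd' with h' | h'
  · exact Or.inl ((Function.isPeriodicPt_iff_minimalPeriod_dvd).mpr h')
  · exact Or.inr ((Function.isPeriodicPt_iff_minimalPeriod_dvd).mpr h')

lemma ncv (S : Set ℕ) (hS : ∀ n ∈ S, n.Prime ∧ 7 ≤ n)
    (Mod : ∀ (M : Type), Lf.Structure M → Prop)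
    (hmod : ∀ M inst, Mod M inst → ModelT2 S M inst)
    (h4 : ∀ k, ModelT4 S (ZMod k) (instZ k) → Mod (ZMod k) (instZ k)) :
    NotConvexVia Mod := by
  have hk2 : ∀ n ∈ S, ¬ (2 ∣ n) := fun n hn h =>
    absurd ((Nat.prime_dvd_prime_iff_eq Nat.prime_two (hS n hn).1).mp h)
      (by have := (hS n hn).2; omega)
  have hk3 : ∀ n ∈ S, ¬ (3 ∣ n) := fun n hn h =>
    absurd ((Nat.prime_dvd_prime_iff_eq Nat.prime_three (hS n hn).1).mp h)
      (by have := (hS n hn).2; omega)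
  have hm2 : ModelT4 S (ZMod 2) (instZ 2) := by
    refine modelT4_instZ S hS 2 hk2 (by norm_num) ?_
    rintro ⟨-, h⟩
    exact h 2 (by norm_num) (by norm_num) (by norm_num) (by rw [iter_instZ]; decide)
  have hm3 : ModelT4 S (ZMod 3) (instZ 3) := by
    refine modelT4_instZ S hS 3 hk3 (by norm_num) ?_
    rintro ⟨-, h⟩
    exact h 3 (by norm_num) (by norm_num) (by norm_num) (by rw [iter_instZ]; decide)
  refine ⟨fun M inst hM a => valid_T2 S M inst (hmod M inst hM) a, ?_, ?_⟩
  · intro h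
    have := h (ZMod 3) (instZ 3) (h4 3 hm3) 0 (by rw [iter_instZ]; decide)
    rw [iter_instZ] at this
    exact absurd this (by decide)
  · intro h
    have := h (ZMod 2) (instZ 2) (h4 2 hm2) 0 (by rw [iter_instZ]; decide)
    rw [iter_instZ] at this
    exact absurd this (by decide)

/-- For i ∈ {2, 4}, the theory T_i is not convex. -/
theorem stmt_4 (S : Set ℕ) (hS : ∀ n ∈ S, n.Prime ∧ 7 ≤ n) :
    NotConvexVia (ModelT2 S) ∧ NotConvexVia (ModelT4 S) := by
  exact ⟨ncv S hS (ModelT2 S) (fun _ _ h => h) (fun _ h => h.1),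
    ncv S hS (ModelT4 S) (fun _ _ h => h.1) (fun _ h => h)⟩
end

section
/- For each i ∈ {1, 2, 3, 4}: let φ be a conjunction of flat Σ_f-literals, i.e., literals of the form f(v) = w, v = w, or v ≠ w where v and w are variables; let V be a finite nonempty set of variables with vars(φ) ⊆ V, and let δ_V be an arrangement of V. If φ ∧ δ_V is satisfiable in some model of T_i, then there is a model A of T_i and a valuation satisfying φ ∧ δ_V such that every element of the domain of A is the value of some variable in V. (This is the key property establishing that T_i has a strong witness.) -/
open FirstOrder FirstOrder.Language

/-- `M` is a model of T_i, for i indexed by `Fin 4`. -/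
def ModelT (S : Set ℕ) (i : Fin 4) (M : Type) (inst : Lf.Structure M) : Prop :=
  match i with
  | 0 => ModelT1 S M inst
  | 1 => ModelT2 S M inst
  | 2 => ModelT3 S M inst
  | 3 => ModelT4 S M inst

/-- `φ` is a conjunction of flat literals: literals of the form `f(v) = w`, `v = w`,
or `v ≠ w`, where `v` and `w` are variables. -/
inductive IsFlatConj {α : Type} : Lf.Formula α → Prop
  | funEq (v w : α) :
      IsFlatConj (Term.equal (Term.func fSymb ![Term.var v]) (Term.var w))
  | varEq (v w : α) : IsFlatConj (Term.equal (Term.var v) (Term.var w))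
  | varNe (v w : α) : IsFlatConj (Term.equal (Term.var v) (Term.var w)).not
  | conj (φ ψ : Lf.Formula α) : IsFlatConj φ → IsFlatConj ψ → IsFlatConj (φ ⊓ ψ)

/-- A valuation `v` satisfies the arrangement `δ_V^E` determined on the variable set `V` by
the equivalence relation `E` iff formula values agree with `E` on `V`. -/
def RealizesArrangement {α : Type} {M : Type} (E : Setoid α) (V : Finset α) (v : α → M) : Prop :=
  ∀ x ∈ V, ∀ y ∈ V, (E.r x y ↔ v x = v y)

/-!
Put `W = v(V)`. The flat literals of `φ` only see `f` on pairs `a, f a` that both lie in `W`,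
so it suffices to complete this partial map to a total map `g : W → W` satisfying the axioms of
`T_i`; these axioms only depend on which cycle lengths occur and on whether the domain is
trivial.

If some nonempty subset of `W` is closed under `f`, send every point whose image leaves `W`
into it: then every `g`-cycle is an `f`-cycle. Otherwise every `f`-orbit leaves `W`; pick `u`
with `f u ∉ W` and `p ≠ u` with `f p ∉ W \ {u}`, let `g` swap them and send the remaining
escaping points to `u`. The only cycle of `g` is then the 2-cycle `{u, p}`, which no axiom
forbids because the primes in `S` are at least 7. A singleton `W` carries the identity.
-/

open Function Set

section Dynamics

variable {X Y : Type*}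

def cycleLengths (g : X → X) : Set ℕ := minimalPeriod g '' periodicPts g

theorem exists_isPeriodicPt_of_cycleLengths_subset {g : X → X} {f : Y → Y}
    (hcyc : cycleLengths g ⊆ cycleLengths f) {n : ℕ} (hn : 0 < n) {b : X}
    (hb : IsPeriodicPt g n b) : ∃ a, IsPeriodicPt f n a := by
  obtain ⟨a, -, ha⟩ := hcyc ⟨b, mk_mem_periodicPts hn hb, rfl⟩
  exact ⟨a, isPeriodicPt_iff_minimalPeriod_dvd.2 (ha ▸ hb.minimalPeriod_dvd)⟩

theorem Set.MapsTo.mem_of_iterate_mem {g : X → X} {T : Set X} (hT : MapsTo g T T) {a : X}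
    (ha : a ∈ periodicPts g) {j : ℕ} (hj : g^[j] a ∈ T) : a ∈ T := by
  obtain ⟨n, hn, hper⟩ := ha
  have hback : g^[n * j - j] (g^[j] a) = a := by
    rw [← iterate_add_apply, Nat.sub_add_cancel (Nat.le_mul_of_pos_left j hn)]
    exact hper.mul_const j
  exact hback ▸ hT.iterate _ hj

theorem minimalPeriod_eq_of_apply_eq_on_periodicPts {g : X → X} {f : Y → Y} {ι : X → Y}
    (hι : Injective ι) (hgf : ∀ a ∈ periodicPts g, ι (g a) = f (ι a)) {a : X}
    (ha : a ∈ periodicPts g) : minimalPeriod f (ι a) = minimalPeriod g a := by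
  have hiter : ∀ m, ι (g^[m] a) = f^[m] (ι a) := by
    intro m
    induction m with
    | zero => rfl
    | succ m ih =>
      rw [iterate_succ_apply', iterate_succ_apply', ← ih,
        hgf _ ((bijOn_periodicPts (f := g)).mapsTo.iterate m ha)]
  refine minimalPeriod_eq_minimalPeriod_iff.2 fun n => ?_
  simp only [IsPeriodicPt, IsFixedPt, ← hiter, hι.eq_iff]

theorem cycleLengths_subset_of_apply_eq_on_periodicPts {g : X → X} {f : Y → Y} {ι : X → Y}
    (hι : Injective ι) (hgf : ∀ a ∈ periodicPts g, ι (g a) = f (ι a)) :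
    cycleLengths g ⊆ cycleLengths f := by
  rintro _ ⟨a, ha, rfl⟩
  have hmin := minimalPeriod_eq_of_apply_eq_on_periodicPts hι hgf ha
  exact ⟨ι a, minimalPeriod_pos_iff_mem_periodicPts.1
    (hmin ▸ minimalPeriod_pos_of_mem_periodicPts ha), hmin⟩

end Dynamics

theorem cycleProp_iff_minimalPeriod_eq {M : Type} {inst : Lf.Structure M} {n : ℕ} (hn : 0 < n)
    {a : M} : cycleProp M inst n a ↔ minimalPeriod (fFun M inst) a = n := by
  constructor
  · rintro ⟨hper, hmin⟩
    have hper : IsPeriodicPt (fFun M inst) n a := hper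
    by_contra hne
    exact hmin _ hper.minimalPeriod_dvd hne (hper.minimalPeriod_pos hn)
      (isPeriodicPt_minimalPeriod _ a)
  · rintro rfl
    exact ⟨iterate_minimalPeriod, fun m hm hmn hm1 =>
      not_isPeriodicPt_of_pos_of_lt_minimalPeriod (by omega) ((Nat.le_of_dvd hn hm).lt_of_ne hmn)⟩

theorem exists_cycleProp_iff {M : Type} {inst : Lf.Structure M} {n : ℕ} (hn : 0 < n) :
    (∃ a, cycleProp M inst n a) ↔ n ∈ cycleLengths (fFun M inst) := by
  simp only [cycleProp_iff_minimalPeriod_eq hn, cycleLengths, mem_image]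
  exact ⟨fun ⟨a, ha⟩ => ⟨a, minimalPeriod_pos_iff_mem_periodicPts.1 (ha ▸ hn), ha⟩,
    fun ⟨a, _, ha⟩ => ⟨a, ha⟩⟩

section Models

variable {S : Set ℕ} {i : Fin 4}

theorem modelT_of_cycleLengths_subset (hS : ∀ n ∈ S, 0 < n) {M N : Type}
    {instM : Lf.Structure M} {instN : Lf.Structure N} {ι : N → M} (hι : Injective ι)
    (hcyc : cycleLengths (fFun N instN) ⊆ cycleLengths (fFun M instM))
    (hM : ModelT S i M instM) : ModelT S i N instN := by
  have h1 : ModelT1 S M instM → ModelT1 S N instN := by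
    intro hM1 n hn hcycN b hb
    rw [exists_cycleProp_iff (hS n hn)] at hcycN
    obtain ⟨a, ha⟩ := exists_isPeriodicPt_of_cycleLengths_subset hcyc two_pos
      (show IsPeriodicPt _ 2 b from hb)
    exact hM1 n hn ((exists_cycleProp_iff (hS n hn)).2 (hcyc hcycN)) a ha
  have h6 : (¬∃ a, cycleProp M instM 6 a) → ¬∃ b, cycleProp N instN 6 b := by
    simp only [exists_cycleProp_iff (by norm_num : 0 < 6)]
    exact mt (@hcyc 6)
  have h3 : ((∃ a, fFun M instM a = a) → ∀ a b : M, a = b) →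
      (∃ a, fFun N instN a = a) → ∀ a b : N, a = b := by
    rintro hM3 ⟨b, hb⟩ b₁ b₂
    obtain ⟨a, ha⟩ := exists_isPeriodicPt_of_cycleLengths_subset hcyc one_pos
      (show IsPeriodicPt _ 1 b from hb)
    exact hι (hM3 ⟨a, ha⟩ _ _)
  fin_cases i
  exacts [h1 hM, ⟨h1 hM.1, h6 hM.2⟩, ⟨h1 hM.1, h3 hM.2⟩,
    ⟨⟨h1 hM.1.1, h6 hM.1.2⟩, h1 hM.2.1, h3 hM.2.2⟩]

theorem modelT_of_cycleLengths_subset_one_two (hS : ∀ n ∈ S, 2 < n) {N : Type}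
    {inst : Lf.Structure N} (hcyc : cycleLengths (fFun N inst) ⊆ {1, 2})
    (hfix : (∃ a, fFun N inst a = a) → ∀ a b : N, a = b) : ModelT S i N inst := by
  have h1 : ModelT1 S N inst := by
    intro n hn hcycN
    have hn2 := hS n hn
    have := hcyc ((exists_cycleProp_iff (by omega)).1 hcycN)
    simp only [mem_insert_iff, mem_singleton_iff] at this
    omega
  have h6 : ¬∃ a, cycleProp N inst 6 a := by
    rw [exists_cycleProp_iff (by norm_num)]
    intro h
    simpa using hcyc h
  fin_cases i
  exacts [h1, ⟨h1, h6⟩, ⟨h1, hfix⟩, ⟨⟨h1, h6⟩, h1, hfix⟩]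

end Models

abbrev unaryStructure {M : Type} (g : M → M) : Lf.Structure M where
  funMap := fun {n} s x => match n, s, x with
    | 1, _, x => g (x 0)
  RelMap := fun {_} r _ => r.elim

theorem fFun_unaryStructure {M : Type} (g : M → M) : fFun M (unaryStructure g) = g := rfl

section Completion

variable {M : Type} (f : M → M) (W : Set M)

def IsCompletion (g : W → W) : Prop := ∀ a : W, f a ∈ W → (g a : M) = f a

variable {f W}

theorem exists_completion_of_mapsTo {U : Set M} (hUW : U ⊆ W) (hU : U.Nonempty)
    (hUf : MapsTo f U U) :
    ∃ g : W → W, IsCompletion f W g ∧ ∀ a ∈ periodicPts g, (g a : M) = f a := by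
  classical
  obtain ⟨c, hc⟩ := hU
  let g : W → W := fun a => if h : f a ∈ W then ⟨f a, h⟩ else ⟨c, hUW hc⟩
  have hg : IsCompletion f W g := fun a h => by simp only [g, dif_pos h]
  have hgU : MapsTo g (Subtype.val ⁻¹' U) (Subtype.val ⁻¹' U) := fun a ha => by
    simpa only [mem_preimage, hg a (hUW (hUf ha))] using hUf ha
  refine ⟨g, hg, fun a ha => ?_⟩
  by_cases hfa : f a ∈ W
  · exact hg a hfa
  · -- the orbit of `a` passes through `c ∈ U`, so `a ∈ U` and `f a ∈ W` after all
    have hga : (g^[1] a : M) ∈ U := by simpa [g, hfa] using hc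
    exact absurd (hUW (hUf (hgU.mem_of_iterate_mem ha hga))) hfa

theorem exists_completion_of_nontrivial (hW : W.Nontrivial)
    (hinv : ∀ U ⊆ W, U.Nonempty → ¬MapsTo f U U) :
    ∃ g : W → W, IsCompletion f W g ∧ ∀ a ∈ periodicPts g, g (g a) = a ∧ g a ≠ a := by
  classical
  obtain ⟨u, huW, hu⟩ : ∃ u ∈ W, f u ∉ W := by
    simpa [MapsTo] using hinv W subset_rfl hW.nonempty
  obtain ⟨p, hpW, hpu, hp⟩ : ∃ p ∈ W, p ≠ u ∧ (f p ∈ W → f p = u) := by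
    obtain ⟨x, hxW, hxu⟩ := hW.exists_ne u
    simpa [MapsTo] using hinv (W \ {u}) sdiff_subset ⟨x, hxW, hxu⟩
  let u' : W := ⟨u, huW⟩
  let p' : W := ⟨p, hpW⟩
  have hup : u' ≠ p' := fun h => hpu (congrArg Subtype.val h).symm
  let g : W → W := fun a =>
    if a = u' then p' else if a = p' then u' else if h : f a ∈ W then ⟨f a, h⟩ else u'
  have hgu : g u' = p' := if_pos rfl
  have hgp : g p' = u' := by simp [g, hup.symm]
  have hg : IsCompletion f W g := by
    intro a ha
    have hau : a ≠ u' := by rintro rfl; exact hu ha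
    by_cases hap : a = p'
    · subst hap
      exact congrArg Subtype.val hgp ▸ (hp ha).symm
    · simp [g, hau, hap, ha]
  have hT : MapsTo g {u', p'} {u', p'} := by rintro a (rfl | rfl) <;> simp [hgu, hgp]
  refine ⟨g, hg, fun a ha => ?_⟩
  suffices a ∈ ({u', p'} : Set W) by
    rcases this with rfl | rfl <;> simp [hgu, hgp, hup, hup.symm]
  by_contra haT
  have hout : ∀ j, g^[j] a ∉ ({u', p'} : Set W) := fun j hj => haT (hT.mem_of_iterate_mem ha hj)
  -- off `{u', p'}`, `g` avoids `u'` only by following `f`,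
  -- so the orbit of `a` is an `f`-invariant subset of `W`
  refine hinv (range fun j => (g^[j] a : M)) (range_subset_iff.2 fun j => (g^[j] a).2)
    (range_nonempty _) ?_
  rintro _ ⟨j, rfl⟩
  refine ⟨j + 1, ?_⟩
  have hj := hout j
  have hj1 := hout (j + 1)
  simp only [mem_insert_iff, mem_singleton_iff, not_or, iterate_succ_apply'] at hj hj1 ⊢
  by_cases hf : f (g^[j] a) ∈ W
  · exact hg _ hf
  · simp [g, hj.1, hj.2, hf] at hj1

end Completion

theorem exists_modelT_completion {S : Set ℕ} (hS : ∀ n ∈ S, 2 < n) {i : Fin 4} {M : Type}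
    {inst : Lf.Structure M} (hM : ModelT S i M inst) (W : Set M) :
    ∃ g : W → W, IsCompletion (fFun M inst) W g ∧ ModelT S i W (unaryStructure g) := by
  by_cases hinv : ∃ U ⊆ W, U.Nonempty ∧ MapsTo (fFun M inst) U U
  · obtain ⟨U, hUW, hU, hUf⟩ := hinv
    obtain ⟨g, hg, hper⟩ := exists_completion_of_mapsTo hUW hU hUf
    exact ⟨g, hg, modelT_of_cycleLengths_subset (fun n hn => (hS n hn).pos)
      Subtype.val_injective (cycleLengths_subset_of_apply_eq_on_periodicPts
        Subtype.val_injective hper) hM⟩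
  push Not at hinv
  rcases W.subsingleton_or_nontrivial with hW₁ | hW₂
  · refine ⟨id, fun a ha => hW₁ a.2 ha, modelT_of_cycleLengths_subset_one_two hS ?_
      fun _ a b => Subtype.ext (hW₁ a.2 b.2)⟩
    rintro _ ⟨a, -, rfl⟩
    simp [fFun_unaryStructure]
  · obtain ⟨g, hg, hper⟩ := exists_completion_of_nontrivial hW₂ hinv
    refine ⟨g, hg, modelT_of_cycleLengths_subset_one_two hS ?_ fun ⟨a, ha⟩ => ?_⟩
    · rintro _ ⟨a, ha, rfl⟩
      have := minimalPeriod_eq_prime (p := 2) (hper a ha).1 (hper a ha).2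
      simp [fFun_unaryStructure, this]
    · exact absurd ha (hper a (mk_mem_periodicPts one_pos ha)).2

section Realize

variable {α : Type} {M : Type} {inst : Lf.Structure M} {v : α → M}

theorem realizeF_funEq (x y : α) :
    RealizeF M inst (Term.equal (Term.func fSymb ![Term.var x]) (Term.var y)) v ↔
      fFun M inst (v x) = v y := by
  simp [RealizeF, Formula.realize_equal, fFun, Term.realize, Matrix.vec_single_eq_const]

theorem realizeF_varEq (x y : α) :
    RealizeF M inst (Term.equal (Term.var x) (Term.var y)) v ↔ v x = v y :=
  Formula.realize_equal

theorem realizeF_not (φ : Lf.Formula α) :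
    RealizeF M inst φ.not v ↔ ¬RealizeF M inst φ v :=
  Formula.realize_not

theorem realizeF_inf (φ ψ : Lf.Formula α) :
    RealizeF M inst (φ ⊓ ψ) v ↔ RealizeF M inst φ v ∧ RealizeF M inst ψ v :=
  Formula.realize_inf

section FreeVars

variable [DecidableEq α]

theorem freeVarFinset_not {L : Language} (φ : L.Formula α) :
    φ.not.freeVarFinset = φ.freeVarFinset := by
  simp [BoundedFormula.freeVarFinset]

theorem freeVarFinset_inf {L : Language} (φ ψ : L.Formula α) :
    (φ ⊓ ψ).freeVarFinset = φ.freeVarFinset ∪ ψ.freeVarFinset := by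
  simp [min, BoundedFormula.freeVarFinset]

theorem freeVarFinset_funEq (x y : α) :
    (Term.equal (Term.func fSymb ![Term.var x]) (Term.var y) : Lf.Formula α).freeVarFinset =
      {x, y} := by
  simp [Term.equal, Term.bdEqual, BoundedFormula.freeVarFinset, Term.varFinsetLeft]

theorem freeVarFinset_varEq (x y : α) :
    (Term.equal (Term.var x) (Term.var y) : Lf.Formula α).freeVarFinset = {x, y} := by
  simp [Term.equal, Term.bdEqual, BoundedFormula.freeVarFinset, Term.varFinsetLeft]

end FreeVars

theorem IsCompletion.realizeF [DecidableEq α] {W : Set M} {g : W → W}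
    (hg : IsCompletion (fFun M inst) W g) {φ : Lf.Formula α} (hφ : IsFlatConj φ) {w : α → W}
    (hwv : ∀ x ∈ φ.freeVarFinset, (w x : M) = v x) (h : RealizeF M inst φ v) :
    RealizeF W (unaryStructure g) φ w := by
  induction hφ with
  | funEq x y =>
    simp only [freeVarFinset_funEq, Finset.mem_insert, Finset.mem_singleton,
      forall_eq_or_imp, forall_eq] at hwv
    rw [realizeF_funEq] at h ⊢
    have hfx : fFun M inst (w x) ∈ W := by
      rw [hwv.1, h, ← hwv.2]
      exact (w y).2
    rw [fFun_unaryStructure]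
    exact Subtype.ext (by rw [hg _ hfx, hwv.1, hwv.2, h])
  | varEq x y =>
    simp only [freeVarFinset_varEq, Finset.mem_insert, Finset.mem_singleton,
      forall_eq_or_imp, forall_eq] at hwv
    rw [realizeF_varEq] at h ⊢
    exact Subtype.ext (by rw [hwv.1, hwv.2, h])
  | varNe x y =>
    simp only [freeVarFinset_not, freeVarFinset_varEq, Finset.mem_insert,
      Finset.mem_singleton, forall_eq_or_imp, forall_eq] at hwv
    rw [realizeF_not, realizeF_varEq] at h ⊢
    exact fun hxy => h (by rw [← hwv.1, ← hwv.2, hxy])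
  | conj φ ψ _ _ ihφ ihψ =>
    simp only [freeVarFinset_inf, Finset.mem_union] at hwv
    rw [realizeF_inf] at h ⊢
    exact ⟨ihφ (fun x hx => hwv x (Or.inl hx)) h.1, ihψ (fun x hx => hwv x (Or.inr hx)) h.2⟩

end Realize

/-- For each i ∈ {1,2,3,4}: if `φ` is a conjunction of flat literals, `V` is a finite
nonempty set of variables containing the variables of `φ`, and `δ_V` is an arrangement of
`V` such that `φ ∧ δ_V` is satisfiable in a model of T_i, then there is a model of T_i and
a valuation satisfying `φ ∧ δ_V` in which every element of the domain is the value of some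
variable in `V`. -/
theorem stmt_6 (S : Set ℕ) (hS : ∀ n ∈ S, n.Prime ∧ 7 ≤ n) (i : Fin 4)
    (α : Type) [DecidableEq α] (φ : Lf.Formula α) (hφ : IsFlatConj φ)
    (V : Finset α) (hV : V.Nonempty) (hvars : φ.freeVarFinset ⊆ V) (E : Setoid α)
    (hsat : ∃ (M : Type) (inst : Lf.Structure M), ModelT S i M inst ∧
      ∃ v : α → M, RealizeF M inst φ v ∧ RealizesArrangement E V v) :
    ∃ (M : Type) (inst : Lf.Structure M), ModelT S i M inst ∧
      ∃ v : α → M, RealizeF M inst φ v ∧ RealizesArrangement E V v ∧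
        ∀ a : M, ∃ x ∈ V, v x = a := by
  obtain ⟨M, inst, hM, v, hφv, hEv⟩ := hsat
  let W : Set M := v '' V
  obtain ⟨g, hg, hgM⟩ :=
    exists_modelT_completion (fun n hn => by have := (hS n hn).2; omega) hM W
  obtain ⟨x₀, hx₀⟩ := hV
  let w : α → W := fun x => if hx : x ∈ V then ⟨v x, mem_image_of_mem v hx⟩
    else ⟨v x₀, mem_image_of_mem v hx₀⟩
  have hwv : ∀ x ∈ V, (w x : M) = v x := fun x hx => by simp only [w, dif_pos hx]
  refine ⟨W, unaryStructure g, hgM, w, hg.realizeF hφ (fun x hx => hwv x (hvars hx)) hφv,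
    fun x hx y hy => ?_, ?_⟩
  · rw [hEv x hx y hy, Subtype.ext_iff, hwv x hx, hwv y hy]
  · rintro ⟨_, x, hx, rfl⟩
    exact ⟨x, hx, Subtype.ext (hwv x hx)⟩
end

section
/- For each i ∈ {1, 2, 3, 4} and each prime n ≥ 7, consider the quantifier-free Σ_f-formula φ_n := cycle_n(x) ∧ f^4(y) = y (with distinct variables x, y). Then: (a) φ_n is satisfiable in some model of T_i; (b) if n ∈ S, then every model of T_i with a valuation satisfying φ_n has at least n + 4 elements, and there is such a model with exactly n + 4 elements; (c) if n ∉ S, then there is a model of T_i with a valuation satisfying φ_n whose domain has exactly n + 2 elements. (These facts show that a computable minimal model function for T_i would decide membership in S.) -/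
open FirstOrder FirstOrder.Language

/- ### auxiliary material -/

def mkStruct (M : Type) (g : M → M) : Lf.Structure M where
  funMap {n} s v := match n, s with
    | 1, _ => g (v 0)
    | 0, s => nomatch s
    | (_+2), s => nomatch s
  RelMap {n} r := nomatch r

lemma modelT_of_T4 {S : Set ℕ} {M : Type} {inst : Lf.Structure M}
    (h : ModelT4 S M inst) (i : Fin 4) : ModelT S i M inst := by
  fin_cases i
  · exact h.1.1
  · exact h.1
  · exact h.2
  · exact h

def g2 (k₁ k₂ : ℕ) : ZMod k₁ ⊕ ZMod k₂ → ZMod k₁ ⊕ ZMod k₂ :=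
  Sum.map (· + 1) (· + 1)

def inst2 (k₁ k₂ : ℕ) : Lf.Structure (ZMod k₁ ⊕ ZMod k₂) := mkStruct _ (g2 k₁ k₂)

lemma fFun_inst2 (k₁ k₂ : ℕ) : fFun _ (inst2 k₁ k₂) = g2 k₁ k₂ := rfl

lemma zmod_iter (k m : ℕ) (x : ZMod k) : (fun y => y + 1)^[m] x = x + m := by
  induction m with
  | zero => simp
  | succ m ih => rw [Function.iterate_succ_apply', ih]; push_cast; ring

lemma g2_iter_inl (k₁ k₂ m : ℕ) (x : ZMod k₁) :
    (g2 k₁ k₂)^[m] (Sum.inl x) = Sum.inl (x + m) := by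
  rw [← zmod_iter k₁ m x]
  induction m with
  | zero => simp
  | succ m ih => rw [Function.iterate_succ_apply', Function.iterate_succ_apply', ih]; rfl

lemma g2_iter_inr (k₁ k₂ m : ℕ) (y : ZMod k₂) :
    (g2 k₁ k₂)^[m] (Sum.inr y) = Sum.inr (y + m) := by
  rw [← zmod_iter k₂ m y]
  induction m with
  | zero => simp
  | succ m ih => rw [Function.iterate_succ_apply', Function.iterate_succ_apply', ih]; rfl

lemma g2_iter_inl_eq (k₁ k₂ m : ℕ) [NeZero k₁] (x : ZMod k₁) :
    (g2 k₁ k₂)^[m] (Sum.inl x) = Sum.inl x ↔ k₁ ∣ m := by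
  rw [g2_iter_inl, Sum.inl.injEq, add_eq_left, ZMod.natCast_eq_zero_iff]

lemma g2_iter_inr_eq (k₁ k₂ m : ℕ) [NeZero k₂] (y : ZMod k₂) :
    (g2 k₁ k₂)^[m] (Sum.inr y) = Sum.inr y ↔ k₂ ∣ m := by
  rw [g2_iter_inr, Sum.inr.injEq, add_eq_left, ZMod.natCast_eq_zero_iff]

/-- In the two-cycle model, `cycleProp p z` forces `k₁ ∣ p` or `k₂ ∣ p`. -/
lemma cycle_dvd (k₁ k₂ p : ℕ) [NeZero k₁] [NeZero k₂] (z : ZMod k₁ ⊕ ZMod k₂)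
    (h : cycleProp _ (inst2 k₁ k₂) p z) :
    (∃ x, z = Sum.inl x ∧ k₁ ∣ p) ∨ (∃ y, z = Sum.inr y ∧ k₂ ∣ p) := by
  have h1 := h.1
  rw [fFun_inst2] at h1
  cases z with
  | inl x => exact Or.inl ⟨x, rfl, (g2_iter_inl_eq k₁ k₂ p x).mp h1⟩
  | inr y => exact Or.inr ⟨y, rfl, (g2_iter_inr_eq k₁ k₂ p y).mp h1⟩

/-- `cycleProp n (inl 0)` for `n` prime when `k₂` does not divide... -/
lemma cycle_inl (n k₂ : ℕ) [NeZero n] [NeZero k₂] (hn : n.Prime) (h7 : 7 ≤ n) :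
    cycleProp _ (inst2 n k₂) n (Sum.inl (0 : ZMod n)) := by
  constructor
  · rw [fFun_inst2, g2_iter_inl_eq]
  · intro m hm hmn h1 hc
    rw [fFun_inst2, g2_iter_inl_eq] at hc
    have := hn.eq_one_or_self_of_dvd m hm
    have := Nat.le_of_dvd (by omega) hc
    omega

/-- no x with f²x = x when neither k₁ nor k₂ divides 2 -/
lemma no_sq (k₁ k₂ : ℕ) [NeZero k₁] [NeZero k₂] (h1 : ¬ k₁ ∣ 2) (h2 : ¬ k₂ ∣ 2) :
    ∀ z, g2 k₁ k₂ (g2 k₁ k₂ z) ≠ z := by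
  intro z hz
  have hz2 : (g2 k₁ k₂)^[2] z = z := hz
  cases z with
  | inl x => exact h1 ((g2_iter_inl_eq k₁ k₂ 2 x).mp hz2)
  | inr y => exact h2 ((g2_iter_inr_eq k₁ k₂ 2 y).mp hz2)

/-- Model A := ZMod n ⊕ ZMod 4 is a model of T₄ for any S with primes ≥ 7. -/
lemma modelA (S : Set ℕ) (hS : ∀ p ∈ S, p.Prime ∧ 7 ≤ p) (n : ℕ) [NeZero n]
    (hn : n.Prime) (h7 : 7 ≤ n) : ModelT4 S (ZMod n ⊕ ZMod 4) (inst2 n 4) := by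
  have hsq : ∀ z, g2 n 4 (g2 n 4 z) ≠ z :=
    no_sq n 4 (fun h => by have := Nat.le_of_dvd (by norm_num) h; omega) (by norm_num)
  have hT1 : ModelT1 S _ (inst2 n 4) := by
    intro p _ _ z
    rw [fFun_inst2]; exact hsq z
  refine ⟨⟨hT1, ?_⟩, hT1, ?_⟩
  · rintro ⟨z, hz⟩
    rcases cycle_dvd n 4 6 z hz with ⟨x, _, hd⟩ | ⟨y, _, hd⟩
    · have := Nat.le_of_dvd (by norm_num) hd; omega
    · norm_num at hd
  · rintro ⟨z, hz⟩
    rw [fFun_inst2] at hz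
    have hz1 : (g2 n 4)^[1] z = z := hz
    cases z with
    | inl x =>
      have := (g2_iter_inl_eq n 4 1 x).mp hz1
      have := Nat.le_of_dvd (by norm_num) this; omega
    | inr y =>
      have := (g2_iter_inr_eq n 4 1 y).mp hz1
      norm_num at this

/-- Model B := ZMod n ⊕ ZMod 2 is a model of T₄ when n ∉ S. -/
lemma modelB (S : Set ℕ) (hS : ∀ p ∈ S, p.Prime ∧ 7 ≤ p) (n : ℕ) [NeZero n]
    (hn : n.Prime) (h7 : 7 ≤ n) (hnS : n ∉ S) :
    ModelT4 S (ZMod n ⊕ ZMod 2) (inst2 n 2) := by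
  have hT1 : ModelT1 S _ (inst2 n 2) := by
    rintro p hp ⟨z, hz⟩ z'
    exfalso
    obtain ⟨hpP, hp7⟩ := hS p hp
    rcases cycle_dvd n 2 p z hz with ⟨x, _, hd⟩ | ⟨y, _, hd⟩
    · rcases (Nat.prime_dvd_prime_iff_eq hn hpP).mp hd with rfl
      exact hnS hp
    · rcases (Nat.prime_dvd_prime_iff_eq Nat.prime_two hpP).mp hd with rfl
      omega
  refine ⟨⟨hT1, ?_⟩, hT1, ?_⟩
  · rintro ⟨z, hz⟩
    rcases cycle_dvd n 2 6 z hz with ⟨x, rfl, hd⟩ | ⟨y, rfl, hd⟩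
    · have := Nat.le_of_dvd (by norm_num) hd; omega
    · refine hz.2 2 (by norm_num) (by norm_num) (by norm_num) ?_
      rw [fFun_inst2, g2_iter_inr_eq]
  · rintro ⟨z, hz⟩
    rw [fFun_inst2] at hz
    have hz1 : (g2 n 2)^[1] z = z := hz
    exfalso
    cases z with
    | inl x =>
      have := (g2_iter_inl_eq n 2 1 x).mp hz1
      have := Nat.le_of_dvd (by norm_num) this; omega
    | inr y =>
      have := (g2_iter_inr_eq n 2 1 y).mp hz1
      norm_num at this

lemma card2 (k₁ k₂ : ℕ) [NeZero k₁] [NeZero k₂] :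
    Cardinal.mk (ZMod k₁ ⊕ ZMod k₂) = ((k₁ + k₂ : ℕ) : Cardinal) := by
  rw [Cardinal.mk_fintype]
  simp [ZMod.card]

/-- lower bound -/
lemma lower (S : Set ℕ) (n : ℕ) (hn : n.Prime) (h7 : 7 ≤ n) (hnS : n ∈ S)
    (M : Type) (inst : Lf.Structure M) (h1 : ModelT1 S M inst)
    (a b : M) (ha : cycleProp M inst n a) (hb : (fFun M inst)^[4] b = b) :
    ((n + 4 : ℕ) : Cardinal) ≤ Cardinal.mk M := by
  set g := fFun M inst with hg
  have hsq : ∀ z, g (g z) ≠ z := h1 n hnS ⟨a, ha⟩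
  have hpa : Function.IsPeriodicPt g n a := ha.1
  have hpb : Function.IsPeriodicPt g 4 b := hb
  -- minimal period of a is n
  have hma : Function.minimalPeriod g a = n := by
    rcases hn.eq_one_or_self_of_dvd _ hpa.minimalPeriod_dvd with h | h
    · exfalso
      refine ha.2 1 (one_dvd n) (by omega) le_rfl ?_
      have := Function.iterate_minimalPeriod (f := g) (x := a)
      rw [h] at this
      exact this
    · exact h
  have hmb : Function.minimalPeriod g b = 4 := by
    have hd : Function.minimalPeriod g b ∣ 4 := hpb.minimalPeriod_dvd
    have hne : Function.minimalPeriod g b ≠ 0 := by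
      intro h0; rw [h0] at hd; norm_num at hd
    have hle : Function.minimalPeriod g b ≤ 4 := Nat.le_of_dvd (by norm_num) hd
    have hit := Function.iterate_minimalPeriod (f := g) (x := b)
    interval_cases h : Function.minimalPeriod g b
    · exact absurd rfl hne
    · exfalso; simp only [Function.iterate_one] at hit
      exact hsq b (by rw [hit, hit])
    · exfalso
      exact hsq b (by simpa [Function.iterate_succ_apply'] using hit)
    · exfalso; norm_num at hd
    · rfl
  -- cross orbits are disjoint
  have hcross : ∀ i j : ℕ, g^[i] a ≠ g^[j] b := by
    intro i j hij
    have h1' : Function.IsPeriodicPt g n (g^[i] a) := hpa.apply_iterate i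
    have h2' : Function.IsPeriodicPt g 4 (g^[j] b) := hpb.apply_iterate j
    rw [hij] at h1'
    have hgcd : Function.IsPeriodicPt g (Nat.gcd n 4) (g^[j] b) := h1'.gcd h2'
    have : Nat.gcd n 4 = 1 := by
      have : ¬ n ∣ 4 := fun h => by have := Nat.le_of_dvd (by norm_num) h; omega
      exact Nat.Coprime.gcd_eq_one ((Nat.Prime.coprime_iff_not_dvd hn).mpr this)
    rw [this] at hgcd
    have hfix : g (g^[j] b) = g^[j] b := hgcd
    exact hsq (g^[j] b) (by rw [hfix, hfix])
  have hinj : Function.Injective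
      (Sum.elim (fun i : Fin n => g^[(i : ℕ)] a) (fun j : Fin 4 => g^[(j : ℕ)] b)) := by
    rintro (i | i) (j | j) hij <;> simp only [Sum.elim_inl, Sum.elim_inr] at hij
    · congr 1
      have := Function.iterate_injOn_Iio_minimalPeriod (f := g) (x := a)
        (by rw [hma]; exact Set.mem_Iio.mpr i.2) (by rw [hma]; exact Set.mem_Iio.mpr j.2) hij
      exact Fin.ext this
    · exact absurd hij (hcross i j)
    · exact absurd hij.symm (hcross j i)
    · congr 1
      have := Function.iterate_injOn_Iio_minimalPeriod (f := g) (x := b)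
        (by rw [hmb]; exact Set.mem_Iio.mpr i.2) (by rw [hmb]; exact Set.mem_Iio.mpr j.2) hij
      exact Fin.ext this
  have := Cardinal.mk_le_of_injective hinj
  have hcard : Cardinal.mk (Fin n ⊕ Fin 4) = ((n + 4 : ℕ) : Cardinal) := by
    rw [Cardinal.mk_fintype]; simp
  rwa [hcard] at this

/-- For each i ∈ {1,2,3,4} and each prime n ≥ 7, for the formula
`φ_n := cycle_n(x) ∧ f⁴(y) = y`:
(a) `φ_n` is satisfiable in some model of T_i;
(b) if n ∈ S, every model of T_i with a valuation satisfying `φ_n` has at least `n + 4`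
elements, and there is such a model with exactly `n + 4` elements;
(c) if n ∉ S, there is a model of T_i with a valuation satisfying `φ_n` with exactly
`n + 2` elements. -/
theorem stmt_7 (S : Set ℕ) (hS : ∀ n ∈ S, n.Prime ∧ 7 ≤ n) (i : Fin 4)
    (n : ℕ) (hn : n.Prime) (h7 : 7 ≤ n) :
    (∃ (M : Type) (inst : Lf.Structure M), ModelT S i M inst ∧
        ∃ a b : M, cycleProp M inst n a ∧ (fFun M inst)^[4] b = b) ∧
    (n ∈ S →
      (∀ (M : Type) (inst : Lf.Structure M), ModelT S i M inst →
        ∀ a b : M, cycleProp M inst n a → (fFun M inst)^[4] b = b →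
          ((n + 4 : ℕ) : Cardinal) ≤ Cardinal.mk M) ∧
      (∃ (M : Type) (inst : Lf.Structure M), ModelT S i M inst ∧
        (∃ a b : M, cycleProp M inst n a ∧ (fFun M inst)^[4] b = b) ∧
          Cardinal.mk M = ((n + 4 : ℕ) : Cardinal))) ∧
    (n ∉ S →
      ∃ (M : Type) (inst : Lf.Structure M), ModelT S i M inst ∧
        (∃ a b : M, cycleProp M inst n a ∧ (fFun M inst)^[4] b = b) ∧
          Cardinal.mk M = ((n + 2 : ℕ) : Cardinal)) := by
  haveI : NeZero n := ⟨hn.pos.ne'⟩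
  have hwitA : ∃ a b : ZMod n ⊕ ZMod 4, cycleProp _ (inst2 n 4) n a ∧
      (fFun _ (inst2 n 4))^[4] b = b := by
    refine ⟨Sum.inl 0, Sum.inr 0, cycle_inl n 4 hn h7, ?_⟩
    rw [fFun_inst2, g2_iter_inr_eq]
  have hmA := modelT_of_T4 (modelA S hS n hn h7) i
  refine ⟨⟨_, _, hmA, hwitA⟩, fun hnS => ⟨?_, ?_⟩, fun hnS => ?_⟩
  · intro M inst hM a b ha hb
    have h1 : ModelT1 S M inst := by
      fin_cases i
      · exact hM
      · exact hM.1
      · exact hM.1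
      · exact hM.1.1
    exact lower S n hn h7 hnS M inst h1 a b ha hb
  · exact ⟨_, _, hmA, hwitA, card2 n 4⟩
  · refine ⟨_, _, modelT_of_T4 (modelB S hS n hn h7 hnS) i, ⟨Sum.inl 0, Sum.inr 0,
      cycle_inl n 2 hn h7, ?_⟩, card2 n 2⟩
    rw [fFun_inst2, g2_iter_inr_eq]
    norm_num
end

section
/- Let T be a theory over a countable one-sorted algebraic signature, i.e., a signature with no predicate symbols other than equality. If T has a strong pre-witness, then T has an additive pre-witness. -/
open FirstOrder FirstOrder.Language

universe u v

/-- `M` (with structure `inst`) is a model of the theory `T`. -/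
def ModelsT (L : FirstOrder.Language.{u, v}) (T : L.Theory) (M : Type) (inst : L.Structure M) : Prop :=
  letI := inst
  T.Model M

/-- Realization of a formula, with the structure instance given explicitly. -/
def RealizeIn (L : FirstOrder.Language.{u, v}) (M : Type) (inst : L.Structure M) {α : Type}
    (φ : L.Formula α) (v : α → M) : Prop :=
  letI := inst
  φ.Realize v

/-- A valuation `v` satisfies the arrangement `δ_V^E` determined on the finite variable
set `V` by the equivalence relation `E`. -/
def RealizesArr {M : Type} (E : Setoid ℕ) (V : Finset ℕ) (v : ℕ → M) : Prop :=
  ∀ x ∈ V, ∀ y ∈ V, (E.r x y ↔ v x = v y)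

/-- `T` is stably finite: every quantifier-free formula satisfied in a model of `T` is
satisfied in a finite model of `T` of no greater cardinality. -/
def StablyFiniteT (L : FirstOrder.Language.{u, v}) (T : L.Theory) : Prop :=
  ∀ φ : L.Formula ℕ, φ.IsQF →
    ∀ (M : Type) (inst : L.Structure M), ModelsT L T M inst →
      ∀ v : ℕ → M, RealizeIn L M inst φ v →
        ∃ (N : Type) (instN : L.Structure N), ModelsT L T N instN ∧ Finite N ∧
          Cardinal.mk N ≤ Cardinal.mk M ∧ ∃ w : ℕ → N, RealizeIn L N instN φ w

/-- `T` is finitely smooth: for every quantifier-free formula `φ`, model of `T` with a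
valuation satisfying `φ`, and finite cardinal `κ` at least the size of the model, there
is a model of `T` of size exactly `κ` with a valuation satisfying `φ`. -/
def FinitelySmoothT (L : FirstOrder.Language.{u, v}) (T : L.Theory) : Prop :=
  ∀ φ : L.Formula ℕ, φ.IsQF →
    ∀ (M : Type) (inst : L.Structure M), ModelsT L T M inst →
      ∀ v : ℕ → M, RealizeIn L M inst φ v →
        ∀ κ : ℕ, Cardinal.mk M ≤ (κ : Cardinal) →
          ∃ (N : Type) (instN : L.Structure N), ModelsT L T N instN ∧
            Cardinal.mk N = (κ : Cardinal) ∧ ∃ w : ℕ → N, RealizeIn L N instN φ w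

/-- `T` is smooth: for every quantifier-free formula `φ`, model of `T` with a valuation
satisfying `φ`, and cardinal `κ` at least the size of the model, there is a model of `T`
of size exactly `κ` with a valuation satisfying `φ`. -/
def SmoothT (L : FirstOrder.Language.{u, v}) (T : L.Theory) : Prop :=
  ∀ φ : L.Formula ℕ, φ.IsQF →
    ∀ (M : Type) (inst : L.Structure M), ModelsT L T M inst →
      ∀ v : ℕ → M, RealizeIn L M inst φ v →
        ∀ κ : Cardinal, Cardinal.mk M ≤ κ →
          ∃ (N : Type) (instN : L.Structure N), ModelsT L T N instN ∧
            Cardinal.mk N = κ ∧ ∃ w : ℕ → N, RealizeIn L N instN φ w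

/-- `T` is stably infinite: every quantifier-free formula satisfiable in some model of `T`
is satisfiable in some model of `T` with infinite domain. -/
def StablyInfiniteT (L : FirstOrder.Language.{u, v}) (T : L.Theory) : Prop :=
  ∀ φ : L.Formula ℕ, φ.IsQF →
    (∃ (M : Type) (inst : L.Structure M), ModelsT L T M inst ∧
      ∃ v : ℕ → M, RealizeIn L M inst φ v) →
    ∃ (M : Type) (inst : L.Structure M), ModelsT L T M inst ∧ Infinite M ∧
      ∃ v : ℕ → M, RealizeIn L M inst φ v

/-- `wit` is a pre-witness for `T`: it maps quantifier-free formulas to quantifier-free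
formulas; `φ` and `∃x⃗. wit(φ)` (where `x⃗ = vars(wit(φ)) \ vars(φ)`) hold in exactly the
same models-with-valuations of `T`; and if `wit(φ)` is satisfiable in a model of `T`,
then `φ` is satisfied in some model of `T` under a valuation in which every element of
the domain is the value of some variable of `wit(φ)`. -/
def IsPreWitness (L : FirstOrder.Language.{u, v}) (T : L.Theory) (wit : L.Formula ℕ → L.Formula ℕ) :
    Prop :=
  (∀ φ : L.Formula ℕ, φ.IsQF → (wit φ).IsQF) ∧
  (∀ φ : L.Formula ℕ, φ.IsQF →
    ∀ (M : Type) (inst : L.Structure M), ModelsT L T M inst → ∀ v : ℕ → M,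
      (RealizeIn L M inst φ v ↔
        ∃ w : ℕ → M, (∀ x : ℕ, x ∉ (wit φ).freeVarFinset \ φ.freeVarFinset → w x = v x) ∧
          RealizeIn L M inst (wit φ) w)) ∧
  (∀ φ : L.Formula ℕ, φ.IsQF →
    (∃ (M : Type) (inst : L.Structure M), ModelsT L T M inst ∧
      ∃ v : ℕ → M, RealizeIn L M inst (wit φ) v) →
    ∃ (M : Type) (inst : L.Structure M), ModelsT L T M inst ∧
      ∃ v : ℕ → M, RealizeIn L M inst φ v ∧
        ∀ a : M, ∃ x ∈ (wit φ).freeVarFinset, v x = a)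

/-- `wit` is a strong pre-witness for `T`: a pre-witness such that in addition, for every
quantifier-free `φ`, finite variable set `V`, and arrangement `δ_V` of `V`, if
`wit(φ) ∧ δ_V` is satisfiable in a model of `T`, then it is satisfied in some model of `T`
under a valuation in which every element of the domain is the value of some variable of
`wit(φ) ∧ δ_V`. -/
def IsStrongPreWitness (L : FirstOrder.Language.{u, v}) (T : L.Theory)
    (wit : L.Formula ℕ → L.Formula ℕ) : Prop :=
  IsPreWitness L T wit ∧
  ∀ φ : L.Formula ℕ, φ.IsQF → ∀ (V : Finset ℕ) (E : Setoid ℕ),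
    (∃ (M : Type) (inst : L.Structure M), ModelsT L T M inst ∧
      ∃ v : ℕ → M, RealizeIn L M inst (wit φ) v ∧ RealizesArr E V v) →
    ∃ (M : Type) (inst : L.Structure M), ModelsT L T M inst ∧
      ∃ v : ℕ → M, RealizeIn L M inst (wit φ) v ∧ RealizesArr E V v ∧
        ∀ a : M, ∃ x ∈ (wit φ).freeVarFinset ∪ V, v x = a

/-- `ψ` is a conjunction of literals all of whose terms are variables: over an algebraic
signature, equalities and disequalities between variables. -/
inductive IsVarConj (L : FirstOrder.Language.{u, v}) : L.Formula ℕ → Prop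
  | varEq (v w : ℕ) : IsVarConj L (Term.equal (Term.var v) (Term.var w))
  | varNe (v w : ℕ) : IsVarConj L (Term.equal (Term.var v) (Term.var w)).not
  | conj (φ ψ : L.Formula ℕ) : IsVarConj L φ → IsVarConj L ψ → IsVarConj L (φ ⊓ ψ)

/-- `wit` is an additive pre-witness for `T`: a pre-witness such that for all
quantifier-free `φ` and conjunctions `ψ` of literals all of whose terms are variables,
`wit(wit(φ) ∧ ψ)` and `wit(φ) ∧ ψ` hold in exactly the same models-with-valuations of `T`
and have the same set of variables. -/
def IsAdditivePreWitness (L : FirstOrder.Language.{u, v}) (T : L.Theory)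
    (wit : L.Formula ℕ → L.Formula ℕ) : Prop :=
  IsPreWitness L T wit ∧
  ∀ φ ψ : L.Formula ℕ, φ.IsQF → IsVarConj L ψ →
    (∀ (M : Type) (inst : L.Structure M), ModelsT L T M inst → ∀ v : ℕ → M,
      (RealizeIn L M inst (wit (wit φ ⊓ ψ)) v ↔ RealizeIn L M inst (wit φ ⊓ ψ) v)) ∧
    (wit (wit φ ⊓ ψ)).freeVarFinset = (wit φ ⊓ ψ).freeVarFinset

section Aux

variable {L : FirstOrder.Language.{u, v}} {T : L.Theory}

/-- `χ` is strongly self-witnessing. -/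
def GoodF (L : FirstOrder.Language.{u, v}) (T : L.Theory) (χ : L.Formula ℕ) : Prop :=
  ∀ (V : Finset ℕ) (E : Setoid ℕ),
    (∃ (M : Type) (inst : L.Structure M), ModelsT L T M inst ∧
      ∃ v : ℕ → M, RealizeIn L M inst χ v ∧ RealizesArr E V v) →
    ∃ (M : Type) (inst : L.Structure M), ModelsT L T M inst ∧
      ∃ v : ℕ → M, RealizeIn L M inst χ v ∧ RealizesArr E V v ∧
        ∀ a : M, ∃ x ∈ χ.freeVarFinset ∪ V, v x = a

theorem fv_inf (φ ψ : L.Formula ℕ) :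
    (φ ⊓ ψ).freeVarFinset = φ.freeVarFinset ∪ ψ.freeVarFinset := by
  show ((φ.imp ψ.not).not).freeVarFinset = _
  simp [BoundedFormula.not]

theorem fv_equal (a b : ℕ) :
    (Term.equal (L := L) (Term.var a) (Term.var b)).freeVarFinset = {a} ∪ {b} := by
  simp [Term.equal, Term.bdEqual, Term.relabel]

theorem realizeIn_inf {M : Type} {inst : L.Structure M} {φ ψ : L.Formula ℕ} {v : ℕ → M} :
    RealizeIn L M inst (φ ⊓ ψ) v ↔ RealizeIn L M inst φ v ∧ RealizeIn L M inst ψ v := by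
  letI := inst
  exact Formula.realize_inf

theorem realizeIn_equal {M : Type} {inst : L.Structure M} {a b : ℕ} {v : ℕ → M} :
    RealizeIn L M inst (Term.equal (Term.var a) (Term.var b)) v ↔ v a = v b := by
  letI := inst
  show Formula.Realize _ _ ↔ _
  simp [Formula.realize_equal]

theorem realizeIn_not {M : Type} {inst : L.Structure M} {φ : L.Formula ℕ} {v : ℕ → M} :
    RealizeIn L M inst φ.not v ↔ ¬ RealizeIn L M inst φ v := by
  letI := inst
  exact Formula.realize_not

theorem IsVarConj.isQF {ψ : L.Formula ℕ} (h : IsVarConj L ψ) : ψ.IsQF := by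
  induction h with
  | varEq a b => exact (BoundedFormula.IsAtomic.equal _ _).isQF
  | varNe a b => exact (BoundedFormula.IsAtomic.equal _ _).isQF.not
  | conj φ ψ h1 h2 ih1 ih2 => exact ih1.inf ih2

theorem varconj_realize {M N : Type} (instM : L.Structure M) (instN : L.Structure N)
    {ψ : L.Formula ℕ} (hψ : IsVarConj L ψ) (v : ℕ → M) (w : ℕ → N)
    (h : ∀ x ∈ ψ.freeVarFinset, ∀ y ∈ ψ.freeVarFinset, (v x = v y ↔ w x = w y)) :
    RealizeIn L M instM ψ v ↔ RealizeIn L N instN ψ w := by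
  induction hψ with
  | varEq a b =>
      rw [realizeIn_equal, realizeIn_equal]
      exact h a (by simp [fv_equal]) b (by simp [fv_equal])
  | varNe a b =>
      rw [realizeIn_not, realizeIn_not, realizeIn_equal, realizeIn_equal]
      exact not_congr (h a (by
        simp only [BoundedFormula.freeVarFinset, fv_equal]; simp) b (by
        simp only [BoundedFormula.freeVarFinset, fv_equal]; simp))
  | conj φ₁ φ₂ h1 h2 ih1 ih2 =>
      rw [realizeIn_inf, realizeIn_inf]
      rw [fv_inf] at h
      exact and_congr
        (ih1 fun x hx y hy => h x (by simp [hx]) y (by simp [hy]))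
        (ih2 fun x hx y hy => h x (by simp [hx]) y (by simp [hy]))

/-- The setoid induced by a valuation on a finite set of variables. -/
def arrSetoid {M : Type} (V' : Finset ℕ) (v : ℕ → M) : Setoid ℕ where
  r x y := (x ∈ V' ∧ y ∈ V' ∧ v x = v y) ∨ x = y
  iseqv := by
    constructor
    · intro x; exact Or.inr rfl
    · rintro x y (⟨hx, hy, hxy⟩ | rfl)
      · exact Or.inl ⟨hy, hx, hxy.symm⟩
      · exact Or.inr rfl
    · rintro x y z (⟨hx, hy, hxy⟩ | rfl) (⟨hy', hz, hyz⟩ | rfl)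
      · exact Or.inl ⟨hx, hz, hxy.trans hyz⟩
      · exact Or.inl ⟨hx, hy, hxy⟩
      · exact Or.inl ⟨hy', hz, hyz⟩
      · exact Or.inr rfl

theorem realizesArr_arrSetoid {M : Type} (V' : Finset ℕ) (v : ℕ → M) :
    RealizesArr (arrSetoid V' v) V' v := by
  intro x hx y hy
  constructor
  · rintro (⟨_, _, hxy⟩ | rfl)
    · exact hxy
    · rfl
  · intro hxy; exact Or.inl ⟨hx, hy, hxy⟩

theorem good_inf {χ ψ : L.Formula ℕ} (hχ : GoodF L T χ) (hψ : IsVarConj L ψ) :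
    GoodF L T (χ ⊓ ψ) := by
  rintro V E ⟨M, inst, hM, v, hv, harr⟩
  rw [realizeIn_inf] at hv
  obtain ⟨hvχ, hvψ⟩ := hv
  set V' : Finset ℕ := V ∪ (χ ⊓ ψ).freeVarFinset with hV'
  set E' : Setoid ℕ := arrSetoid V' v with hE'
  have harr' : RealizesArr E' V' v := realizesArr_arrSetoid V' v
  obtain ⟨N, instN, hN, w, hwχ, hwarr', hcov⟩ :=
    hχ V' E' ⟨M, inst, hM, v, hvχ, harr'⟩
  have hsub : ψ.freeVarFinset ⊆ V' := by
    rw [hV', fv_inf]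
    intro x hx
    simp [hx]
  have hkey : ∀ x ∈ V', ∀ y ∈ V', (v x = v y ↔ w x = w y) := by
    intro x hx y hy
    rw [← harr' x hx y hy, hwarr' x hx y hy]
  refine ⟨N, instN, hN, w, ?_, ?_, ?_⟩
  · rw [realizeIn_inf]
    refine ⟨hwχ, ?_⟩
    rw [← varconj_realize inst instN hψ v w
      (fun x hx y hy => hkey x (hsub hx) y (hsub hy))]
    exact hvψ
  · intro x hx y hy
    have hx' : x ∈ V' := by rw [hV']; simp [hx]
    have hy' : y ∈ V' := by rw [hV']; simp [hy]
    rw [harr x hx y hy]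
    exact hkey x hx' y hy'
  · intro a
    obtain ⟨x, hx, hxa⟩ := hcov a
    refine ⟨x, ?_, hxa⟩
    rw [hV'] at hx
    rw [fv_inf] at *
    simp only [Finset.mem_union] at hx ⊢
    tauto

end Aux

/-- If a theory over a countable algebraic signature has a strong pre-witness, then it
has an additive pre-witness. -/
theorem stmt_11 (L : FirstOrder.Language.{u, v}) (hAlg : L.IsAlgebraic)
    (hCount : L.card ≤ Cardinal.aleph0) (T : L.Theory)
    (h : ∃ wit : L.Formula ℕ → L.Formula ℕ, IsStrongPreWitness L T wit) :
    ∃ wit : L.Formula ℕ → L.Formula ℕ, IsAdditivePreWitness L T wit := by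
  classical
  obtain ⟨wit, hwit, hstrong⟩ := h
  obtain ⟨hQF, hEquiv, hWit⟩ := hwit
  set wit' : L.Formula ℕ → L.Formula ℕ := fun φ => if GoodF L T φ then φ else wit φ with hwit'
  have hgood : ∀ φ : L.Formula ℕ, φ.IsQF → GoodF L T (wit' φ) := by
    intro φ hφ
    by_cases hG : GoodF L T φ
    · simp only [hwit']; rw [if_pos hG]; exact hG
    · simp only [hwit']; rw [if_neg hG]; exact hstrong φ hφ
  refine ⟨wit', ⟨?_, ?_, ?_⟩, ?_⟩
  · intro φ hφ
    by_cases hG : GoodF L T φ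
    · simpa [hwit', if_pos hG] using hφ
    · simpa [hwit', if_neg hG] using hQF φ hφ
  · intro φ hφ M inst hM v
    by_cases hG : GoodF L T φ
    · simp only [hwit', if_pos hG]
      constructor
      · intro hv; exact ⟨v, fun x _ => rfl, hv⟩
      · rintro ⟨w, hw, hre⟩
        have hwv : w = v := funext fun x => hw x (by simp)
        rwa [hwv] at hre
    · simp only [hwit', if_neg hG]
      exact hEquiv φ hφ M inst hM v
  · intro φ hφ hsat
    by_cases hG : GoodF L T φ
    · simp only [hwit', if_pos hG] at hsat ⊢
      obtain ⟨M, inst, hM, v, hv⟩ := hsat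
      obtain ⟨N, instN, hN, w, hw, _, hcov⟩ :=
        hG ∅ (arrSetoid ∅ v) ⟨M, inst, hM, v, hv, by intro x hx; simp at hx⟩
      refine ⟨N, instN, hN, w, hw, fun a => ?_⟩
      obtain ⟨x, hx, hxa⟩ := hcov a
      exact ⟨x, by simpa using hx, hxa⟩
    · simp only [hwit', if_neg hG] at hsat ⊢
      exact hWit φ hφ hsat
  · intro φ ψ hφ hψ
    have hG2 : GoodF L T (wit' φ ⊓ ψ) := good_inf (hgood φ hφ) hψ
    have heq : wit' (wit' φ ⊓ ψ) = wit' φ ⊓ ψ := by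
      rw [hwit']; exact if_pos hG2
    rw [heq]
    exact ⟨fun M inst hM v => Iff.rfl, rfl⟩
end

section
/- Let T be a theory over a one-sorted first-order signature. If T has a strong pre-witness, then T is stably finite. -/
/-!
Given `φ` satisfied in a model `M` of `T`, the pre-witness property yields a valuation `w`
in `M` satisfying `wit φ`. Apply the strong pre-witness property with `V = vars(wit φ)` and
the arrangement that `w` induces on `V`: this gives a model `N` of `T` and a valuation `u`
satisfying `wit φ`, inducing the same arrangement on `V`, and with every element of `N` named
by a variable of `V`. Hence `N` is finite, and `u x ↦ w x` is a well-defined injection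
`N → M`. Finally `u` satisfies `φ` in `N`, again by the pre-witness property.
-/

open FirstOrder FirstOrder.Language

universe u v

open Cardinal

theorem RealizesArr.ker {M : Type} (V : Finset ℕ) (w : ℕ → M) :
    RealizesArr (Setoid.ker w) V w :=
  fun _ _ _ _ => Iff.rfl

theorem RealizesArr.mk_le {M N : Type} {E : Setoid ℕ} {V : Finset ℕ} {u : ℕ → N} {w : ℕ → M}
    (hu : RealizesArr E V u) (hw : RealizesArr E V w) (hcover : ∀ a : N, ∃ x ∈ V, u x = a) :
    #N ≤ #M := by
  choose g hgV hgu using hcover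
  refine mk_le_of_injective (f := fun a => w (g a)) fun a b hab => ?_
  rw [← hgu a, ← hgu b]
  exact (hu _ (hgV a) _ (hgV b)).1 ((hw _ (hgV a) _ (hgV b)).2 hab)

theorem finite_of_forall_exists_mem_eq {N : Type} (V : Finset ℕ) (u : ℕ → N)
    (hcover : ∀ a : N, ∃ x ∈ V, u x = a) : Finite N :=
  Finite.of_surjective (fun x : V => u x) fun a =>
    let ⟨x, hxV, hxa⟩ := hcover a
    ⟨⟨x, hxV⟩, hxa⟩

section Witness

variable {L : FirstOrder.Language.{u, v}} {T : L.Theory} {wit : L.Formula ℕ → L.Formula ℕ}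
  {φ : L.Formula ℕ} {M : Type} {inst : L.Structure M}

theorem IsPreWitness.exists_realize_wit (hwit : IsPreWitness L T wit) (hφ : φ.IsQF)
    (hM : ModelsT L T M inst) {v : ℕ → M} (hv : RealizeIn L M inst φ v) :
    ∃ w : ℕ → M, RealizeIn L M inst (wit φ) w :=
  let ⟨w, _, hw⟩ := (hwit.2.1 φ hφ M inst hM v).1 hv
  ⟨w, hw⟩

theorem IsPreWitness.realize_of_realize_wit (hwit : IsPreWitness L T wit) (hφ : φ.IsQF)
    (hM : ModelsT L T M inst) {w : ℕ → M} (hw : RealizeIn L M inst (wit φ) w) :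
    RealizeIn L M inst φ w :=
  (hwit.2.1 φ hφ M inst hM w).2 ⟨w, fun _ _ => rfl, hw⟩

theorem IsStrongPreWitness.exists_finite_model_mk_le (hwit : IsStrongPreWitness L T wit)
    (hφ : φ.IsQF) (hM : ModelsT L T M inst) {w : ℕ → M} (hw : RealizeIn L M inst (wit φ) w) :
    ∃ (N : Type) (instN : L.Structure N), ModelsT L T N instN ∧ Finite N ∧ #N ≤ #M ∧
      ∃ u : ℕ → N, RealizeIn L N instN (wit φ) u := by
  set V := (wit φ).freeVarFinset
  obtain ⟨N, instN, hN, u, hu, huV, hcover⟩ :=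
    hwit.2 φ hφ V (Setoid.ker w) ⟨M, inst, hM, w, hw, RealizesArr.ker V w⟩
  rw [Finset.union_self] at hcover
  exact ⟨N, instN, hN, finite_of_forall_exists_mem_eq V u hcover,
    huV.mk_le (RealizesArr.ker V w) hcover, u, hu⟩

end Witness

/-- If a theory has a strong pre-witness, then it is stably finite. -/
theorem stmt_12 (L : FirstOrder.Language.{u, v}) (T : L.Theory)
    (h : ∃ wit : L.Formula ℕ → L.Formula ℕ, IsStrongPreWitness L T wit) :
    StablyFiniteT L T := by
  obtain ⟨wit, hwit⟩ := h
  intro φ hφ M inst hM v hv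
  obtain ⟨w, hw⟩ := hwit.1.exists_realize_wit hφ hM hv
  obtain ⟨N, instN, hN, hfin, hle, u, hu⟩ := hwit.exists_finite_model_mk_le hφ hM hw
  exact ⟨N, instN, hN, hfin, hle, u, hwit.1.realize_of_realize_wit hφ hN hu⟩
end

section
/- Let T be a theory over a one-sorted first-order signature. If T is stably infinite and has a strong pre-witness, then T is finitely smooth. -/
open FirstOrder FirstOrder.Language

universe u v

/-!
Take a model `M` of `T` of size at most `κ` and a valuation satisfying `φ`; it extends to a
valuation `w` satisfying `wit φ`. By stable infiniteness, `wit φ` together with the arrangement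
that `w` induces on the variables of `wit φ` holds in an infinite model, where these variables
take at most `|M| ≤ κ` distinct values. Padding with fresh variables sent to new, pairwise
distinct elements gives exactly `κ` values, and the strong pre-witness property produces a model
of `T` consisting of precisely those `κ` values, in which `wit φ`, hence `φ`, holds.
-/

theorem Finset.card_image_eq_of_forall_eq_iff {α β γ : Type*} [DecidableEq β] [DecidableEq γ]
    {s : Finset α} {f : α → β} {g : α → γ} (h : ∀ x ∈ s, ∀ y ∈ s, f x = f y ↔ g x = g y) :
    (s.image f).card = (s.image g).card := by
  classical
  set graph := s.image fun x => (f x, g x)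
  have hfst : graph.image Prod.fst = s.image f := by
    simp [graph, Finset.image_image, Function.comp_def]
  have hsnd : graph.image Prod.snd = s.image g := by
    simp [graph, Finset.image_image, Function.comp_def]
  have hfst_inj : Set.InjOn Prod.fst (graph : Set (β × γ)) := by
    simp only [graph, Finset.coe_image, Set.InjOn, Set.mem_image, Finset.mem_coe]
    rintro _ ⟨x, hx, rfl⟩ _ ⟨y, hy, rfl⟩ (e : f x = f y)
    exact Prod.ext e ((h x hx y hy).mp e)
  have hsnd_inj : Set.InjOn Prod.snd (graph : Set (β × γ)) := by
    simp only [graph, Finset.coe_image, Set.InjOn, Set.mem_image, Finset.mem_coe]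
    rintro _ ⟨x, hx, rfl⟩ _ ⟨y, hy, rfl⟩ (e : g x = g y)
    exact Prod.ext ((h x hx y hy).mpr e) e
  rw [← hfst, ← hsnd, Finset.card_image_of_injOn hfst_inj, Finset.card_image_of_injOn hsnd_inj]

theorem Cardinal.mk_eq_card_image_of_forall_exists {α β : Type} [DecidableEq β] {s : Finset α}
    {t : α → β} (h : ∀ b, ∃ x ∈ s, t x = b) : Cardinal.mk β = (s.image t).card := by
  have huniv : ((s.image t : Finset β) : Set β) = Set.univ :=
    Set.eq_univ_of_forall fun b => by simpa using h b
  rw [← Cardinal.mk_coe_finset, ← Cardinal.mk_univ, ← huniv]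
  rfl

theorem exists_extension_card_image {M : Type*} [DecidableEq M] [Infinite M] (S : Finset ℕ)
    (u : ℕ → M) (k : ℕ) :
    ∃ (V : Finset ℕ) (u' : ℕ → M), S ⊆ V ∧ (∀ x ∈ S, u' x = u x) ∧
      (V.image u').card = (S.image u).card + k := by
  obtain ⟨V, hSV, hV⟩ := Infinite.exists_superset_card_eq S (S.card + k) le_self_add
  let fresh : ℕ ↪ ↥((↑(S.image u) : Set M)ᶜ) :=
    (S.image u).finite_toSet.infinite_compl.natEmbedding
  let u' : ℕ → M := fun x => if x ∈ S then u x else fresh x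
  have hS : S.image u' = S.image u := Finset.image_congr fun x hx => if_pos hx
  have hfresh : (V \ S).image u' = (V \ S).image fun x => (fresh x : M) :=
    Finset.image_congr fun x hx => if_neg (Finset.mem_sdiff.mp hx).2
  have hdisj : Disjoint (S.image u') ((V \ S).image u') := by
    rw [hS, hfresh, Finset.disjoint_left]
    intro _ hu hfx
    obtain ⟨x, -, rfl⟩ := Finset.mem_image.mp hfx
    exact (fresh x).2 hu
  refine ⟨V, u', hSV, fun x hx => if_pos hx, ?_⟩
  rw [← Finset.union_sdiff_of_subset hSV, Finset.image_union, Finset.card_union_of_disjoint hdisj,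
    hS, hfresh,
    Finset.card_image_of_injective _ fun x y e => fresh.injective (Subtype.val_injective e),
    Finset.card_sdiff_of_subset hSV, hV, Nat.add_sub_cancel_left]

namespace FirstOrder.Language

variable {L : Language.{u, v}}

theorem Formula.realize_congr {M α : Type*} [L.Structure M] [DecidableEq α] (φ : L.Formula α)
    {v w : α → M} (h : ∀ x ∈ φ.freeVarFinset, v x = w x) : φ.Realize v ↔ φ.Realize w :=
  (BoundedFormula.realize_restrictFreeVar (f := Subtype.val) v fun _ => rfl).symm.trans
    (BoundedFormula.realize_restrictFreeVar w fun x => h x x.2)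

theorem BoundedFormula.IsQF.iInf {α β : Type*} [Finite β] {n : ℕ} {f : β → L.BoundedFormula α n}
    (h : ∀ b, (f b).IsQF) : (BoundedFormula.iInf f).IsQF := by
  suffices ∀ l : List β, ((l.map f).foldr (· ⊓ ·) ⊤).IsQF from this _
  intro l
  induction l with
  | nil => exact IsQF.top
  | cons b l ih => exact (h b).inf ih

open Classical in
/-- The arrangement `δ_V^E`. -/
noncomputable def arrangement (L : Language.{u, v}) (E : Setoid ℕ) (V : Finset ℕ) : L.Formula ℕ :=
  Formula.iInf fun p : V × V =>
    let eq : L.Formula ℕ := Term.equal (var (p.1 : ℕ)) (var (p.2 : ℕ))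
    if E p.1 p.2 then eq else eq.not

theorem isQF_arrangement (E : Setoid ℕ) (V : Finset ℕ) : (arrangement L E V).IsQF := by
  refine BoundedFormula.IsQF.iInf fun _ => ?_
  split
  · exact (BoundedFormula.IsAtomic.equal _ _).isQF
  · exact (BoundedFormula.IsAtomic.equal _ _).isQF.not

theorem realize_arrangement {M : Type} [L.Structure M] (E : Setoid ℕ) (V : Finset ℕ)
    (v : ℕ → M) : (arrangement L E V).Realize v ↔ RealizesArr E V v := by
  simp only [arrangement, Formula.realize_iInf, RealizesArr, Prod.forall, Subtype.forall]
  refine forall₄_congr fun x _ y _ => ?_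
  split_ifs with hE <;> simp [hE]

variable {T : L.Theory}

theorem StablyInfiniteT.exists_infinite_realize_arrangement (hsi : StablyInfiniteT L T)
    {ψ : L.Formula ℕ} (hψ : ψ.IsQF) {M : Type} {inst : L.Structure M} (hM : ModelsT L T M inst)
    {w : ℕ → M} (hw : RealizeIn L M inst ψ w) (S : Finset ℕ) :
    ∃ (M' : Type) (inst' : L.Structure M'), ModelsT L T M' inst' ∧ Infinite M' ∧
      ∃ u : ℕ → M', RealizeIn L M' inst' ψ u ∧ RealizesArr (Setoid.ker w) S u := by
  have hsat : ∃ (M : Type) (inst : L.Structure M), ModelsT L T M inst ∧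
      ∃ v : ℕ → M, RealizeIn L M inst (ψ ⊓ arrangement L (Setoid.ker w) S) v := by
    let _ := inst
    refine ⟨M, inst, hM, w, Formula.realize_inf.mpr ⟨hw, ?_⟩⟩
    exact (realize_arrangement _ _ _).mpr fun _ _ _ _ => Iff.rfl
  obtain ⟨M', inst', hM', hinf, u, hu⟩ := hsi _ (hψ.inf (isQF_arrangement _ _)) hsat
  let _ := inst'
  obtain ⟨huψ, huarr⟩ := Formula.realize_inf.mp hu
  exact ⟨M', inst', hM', hinf, u, huψ, (realize_arrangement _ _ _).mp huarr⟩

theorem IsStrongPreWitness.exists_card_eq {wit : L.Formula ℕ → L.Formula ℕ}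
    (hwit : IsStrongPreWitness L T wit) {φ : L.Formula ℕ} (hφ : φ.IsQF) {M : Type}
    {inst : L.Structure M} [DecidableEq M] [Infinite M] (hM : ModelsT L T M inst) {u : ℕ → M}
    (hu : RealizeIn L M inst (wit φ) u) {κ : ℕ}
    (hκ : ((wit φ).freeVarFinset.image u).card ≤ κ) :
    ∃ (N : Type) (instN : L.Structure N), ModelsT L T N instN ∧
      Cardinal.mk N = κ ∧ ∃ t : ℕ → N, RealizeIn L N instN φ t := by
  classical
  set S := (wit φ).freeVarFinset
  obtain ⟨V, u', hSV, hu'S, hcard⟩ := exists_extension_card_image S u (κ - (S.image u).card)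
  have hu' : RealizeIn L M inst (wit φ) u' := by
    let _ := inst
    exact (Formula.realize_congr _ fun x hx => (hu'S x hx).symm).mp hu
  obtain ⟨N, instN, hN, t, ht, htarr, htsurj⟩ :=
    hwit.2 φ hφ V (Setoid.ker u') ⟨M, inst, hM, u', hu', fun _ _ _ _ => Iff.rfl⟩
  refine ⟨N, instN, hN, ?_, t, (hwit.1.2.1 φ hφ N instN hN t).mpr ⟨t, fun _ _ => rfl, ht⟩⟩
  rw [Finset.union_eq_right.mpr hSV] at htsurj
  rw [Cardinal.mk_eq_card_image_of_forall_exists htsurj,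
    Finset.card_image_eq_of_forall_eq_iff fun x hx y hy => (htarr x hx y hy).symm, hcard]
  norm_cast
  omega

end FirstOrder.Language

/-- If a theory is stably infinite and has a strong pre-witness, then it is finitely
smooth. -/
theorem stmt_13 (L : FirstOrder.Language.{u, v}) (T : L.Theory)
    (hsi : StablyInfiniteT L T)
    (h : ∃ wit : L.Formula ℕ → L.Formula ℕ, IsStrongPreWitness L T wit) :
    FinitelySmoothT L T := by
  classical
  obtain ⟨wit, hwit⟩ := h
  intro φ hφ M inst hM v hv κ hκ
  obtain ⟨w, -, hw⟩ := (hwit.1.2.1 φ hφ M inst hM v).mp hv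
  set S := (wit φ).freeVarFinset
  obtain ⟨M', inst', hM', hinf, u, hu, harr⟩ :=
    hsi.exists_infinite_realize_arrangement (hwit.1.1 φ hφ) hM hw S
  refine hwit.exists_card_eq hφ hM' hu ?_
  have hwS : ((S.image w).card : Cardinal) ≤ κ :=
    calc ((S.image w).card : Cardinal) = Cardinal.mk (S.image w) := Cardinal.mk_coe_finset.symm
      _ ≤ Cardinal.mk M := Cardinal.mk_subtype_le _
      _ ≤ κ := hκ
  rw [Finset.card_image_eq_of_forall_eq_iff fun x hx y hy => (harr x hx y hy).symm]
  exact_mod_cast hwS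
end

section
/- There exist a one-sorted first-order language L (necessarily uncountable) and an L-theory T such that T is stably finite and finitely smooth, but not smooth. (In particular, the assumption of a countable signature is necessary in the theorem stating that stably finite and finitely smooth theories are smooth.) -/
open FirstOrder FirstOrder.Language

universe u v

/-!
The language has a binary symbol `≺` and unary symbols `P r`, `r : ℝ`. In a model each element `a`
carries the cut `{r | P r a}`, an upper set of `ℝ`, and `≺` is a strict linear order along which
cuts shrink. Fix an enumeration `q` of `ℚ` and, for `r < s`, let `k(r, s)` be the least `k` with
`q k ∈ (r, s]`. The axiom for `r < s` says that in a model with at least `2 k(r, s) + 2` elements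
the `≺`-largest element whose cut contains `s` has a cut missing `r`.

In an infinite model all these axioms apply, so for every `s` that largest element has cut exactly
`[s, ∞)`: infinite models have at least continuum many elements, and smoothness fails between
sizes `1` and `ℵ₀`. A model of size `n`, on the other hand, only needs an element with cut
`[q k, ∞)` for each `k` with `2k + 2 ≤ n`. So finitely many elements of a model, together with such
elements for the missing `k`, form a finite model with the same quantifier-free type; doubling the
values of a formula's variables gives stable finiteness, padding a finite model gives finite
smoothness.
-/

theorem isStrictTotalOrder_iff {α : Type*} (r : α → α → Prop) :
    IsStrictTotalOrder α r ↔
      (∀ a b c, r a b → r b c → r a c) ∧ (∀ a, ¬ r a a) ∧ ∀ a b, r a b ∨ a = b ∨ r b a :=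
  ⟨fun _ => ⟨fun _ _ _ => _root_.trans, irrefl, trichotomous⟩, fun ⟨htrans, hirrefl, htri⟩ =>
    { trans := htrans, irrefl := hirrefl,
      trichotomous := fun a b hab hba => (htri a b).resolve_left hab |>.resolve_right hba }⟩

theorem FirstOrder.Language.Formula.realize_iff_of_eqOn {L : FirstOrder.Language} {M α : Type*}
    [L.Structure M] [DecidableEq α] {φ : L.Formula α} {v w : α → M}
    (h : Set.EqOn v w φ.freeVarFinset) : φ.Realize v ↔ φ.Realize w :=
  (BoundedFormula.realize_restrictFreeVar (f := Subtype.val) v fun _ => rfl).symm.trans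
    (BoundedFormula.realize_restrictFreeVar w fun a => h a.2)

noncomputable section

namespace RealCuts

open Cardinal Set Structure

def Symb : ℕ → Type
  | 1 => ℝ
  | 2 => Unit
  | _ => Empty

def lang : FirstOrder.Language.{0, 0} := ⟨fun _ => Empty, Symb⟩

def precSymb : lang.Relations 2 := ()

def cutSymb (r : ℝ) : lang.Relations 1 := r

section Structure

variable {M : Type*} [lang.Structure M]

def Prec (a b : M) : Prop := RelMap precSymb ![a, b]

def cutSet (a : M) : Set ℝ := {r | RelMap (cutSymb r) ![a]}

end Structure

abbrev ofCuts {X : Type*} (lt : X → X → Prop) (d : X → Set ℝ) : lang.Structure X where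
  funMap f := Empty.elim f
  RelMap {n} R x :=
    match n, R with
    | 1, r => r ∈ d (x 0)
    | 2, _ => lt (x 0) (x 1)

def ratSeq (n : ℕ) : ℝ := ((Denumerable.eqv ℚ).symm n : ℚ)

theorem exists_ratSeq_mem_Ioc {r s : ℝ} (h : r < s) : ∃ j, ratSeq j ∈ Ioc r s := by
  obtain ⟨q, hrq, hqs⟩ := exists_rat_btwn h
  exact ⟨Denumerable.eqv ℚ q, by simpa [ratSeq] using ⟨hrq, hqs.le⟩⟩

/-- Junk value `0` when `s ≤ r`; it is only used for `r < s`. -/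
def ratIdx (r s : ℝ) : ℕ := sInf {j | ratSeq j ∈ Ioc r s}

theorem ratSeq_ratIdx_mem {r s : ℝ} (h : r < s) : ratSeq (ratIdx r s) ∈ Ioc r s :=
  Nat.sInf_mem (exists_ratSeq_mem_Ioc h)

theorem ratIdx_le {r s : ℝ} {j : ℕ} (h : ratSeq j ∈ Ioc r s) : ratIdx r s ≤ j :=
  Nat.sInf_le h

def axTrans : lang.Sentence :=
  ∀' ∀' ∀' (precSymb.boundedFormula₂ &0 &1 ⊓ precSymb.boundedFormula₂ &1 &2 ⟹
    precSymb.boundedFormula₂ &0 &2)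

def axIrrefl : lang.Sentence := ∀' ∼(precSymb.boundedFormula₂ &0 &0)

def axTrichotomous : lang.Sentence :=
  ∀' ∀' (precSymb.boundedFormula₂ &0 &1 ⊔ Term.bdEqual &0 &1 ⊔ precSymb.boundedFormula₂ &1 &0)

def axMono (r s : ℝ) : lang.Sentence :=
  ∀' ((cutSymb r).boundedFormula₁ &0 ⟹ (cutSymb s).boundedFormula₁ &0)

def axAnti (r : ℝ) : lang.Sentence :=
  ∀' ∀' (precSymb.boundedFormula₂ &0 &1 ⊓ (cutSymb r).boundedFormula₁ &1 ⟹
    (cutSymb r).boundedFormula₁ &0)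

def axMax (r s : ℝ) : lang.Sentence :=
  Sentence.cardGe lang (2 * ratIdx r s + 2) ⟹
    ∃' ((cutSymb s).boundedFormula₁ &0 ⊓ ∼((cutSymb r).boundedFormula₁ &0) ⊓
        ∀' ((cutSymb s).boundedFormula₁ &1 ⟹ ∼(precSymb.boundedFormula₂ &0 &1)))

def theory : lang.Theory :=
  {axTrans, axIrrefl, axTrichotomous} ∪ range axAnti ∪
    ⋃ (r : ℝ) (s : ℝ) (_ : r < s), {axMono r s, axMax r s}

section Realize

variable {M : Type*} [lang.Structure M]

theorem realize_axTrans : M ⊨ axTrans ↔ ∀ a b c : M, Prec a b → Prec b c → Prec a c := by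
  simp [axTrans, Sentence.Realize, Formula.Realize, Prec, Fin.snoc]

theorem realize_axIrrefl : M ⊨ axIrrefl ↔ ∀ a : M, ¬ Prec a a := by
  simp [axIrrefl, Sentence.Realize, Formula.Realize, Prec, Fin.snoc]

theorem realize_axTrichotomous :
    M ⊨ axTrichotomous ↔ ∀ a b : M, Prec a b ∨ a = b ∨ Prec b a := by
  simp [axTrichotomous, Sentence.Realize, Formula.Realize, Prec, Fin.snoc, or_assoc]

theorem realize_axMono (r s : ℝ) : M ⊨ axMono r s ↔ ∀ a : M, r ∈ cutSet a → s ∈ cutSet a := by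
  simp [axMono, Sentence.Realize, Formula.Realize, cutSet, Fin.snoc]

theorem realize_axAnti (r : ℝ) :
    M ⊨ axAnti r ↔ ∀ a b : M, Prec a b → r ∈ cutSet b → r ∈ cutSet a := by
  simp [axAnti, Sentence.Realize, Formula.Realize, Prec, cutSet, Fin.snoc]

theorem realize_axMax (r s : ℝ) :
    M ⊨ axMax r s ↔ (((2 * ratIdx r s + 2 : ℕ) : Cardinal) ≤ #M →
      ∃ x : M, s ∈ cutSet x ∧ r ∉ cutSet x ∧ ∀ y, s ∈ cutSet y → ¬ Prec x y) := by
  rw [axMax, Sentence.realize_imp, Sentence.realize_cardGe]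
  simp [Sentence.Realize, Formula.Realize, Prec, cutSet, Fin.snoc, and_assoc]

theorem model_theory_iff :
    M ⊨ theory ↔ IsStrictTotalOrder M Prec ∧ (∀ a : M, IsUpperSet (cutSet a)) ∧
      (∀ a b : M, Prec a b → cutSet b ⊆ cutSet a) ∧
      ∀ r s, r < s → ((2 * ratIdx r s + 2 : ℕ) : Cardinal) ≤ #M →
        ∃ x : M, s ∈ cutSet x ∧ r ∉ cutSet x ∧ ∀ y, s ∈ cutSet y → ¬ Prec x y := by
  rw [Theory.model_iff]
  change theory ⊆ {φ | M ⊨ φ} ↔ _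
  simp only [theory, union_subset_iff, insert_subset_iff, singleton_subset_iff,
    iUnion_subset_iff, range_subset_iff, mem_ofPred_eq, realize_axTrans, realize_axIrrefl,
    realize_axTrichotomous, realize_axAnti, realize_axMono, realize_axMax, isStrictTotalOrder_iff]
  constructor
  · rintro ⟨⟨hord, hanti⟩, hmono⟩
    exact ⟨hord, fun a => isUpperSet_iff_forall_lt.2 fun r s hrs => (hmono r s hrs).1 a,
      fun a b hab r => hanti r a b hab, fun r s hrs => (hmono r s hrs).2⟩
  · rintro ⟨hord, hup, hanti, hmax⟩
    exact ⟨⟨hord, fun r a b hab => @hanti a b hab r⟩,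
      fun r s hrs => ⟨fun a => @hup a r s hrs.le, hmax r s hrs⟩⟩

end Realize

section Model

variable {M : Type*} [lang.Structure M] [h : M ⊨ theory]
include h

instance : IsStrictTotalOrder M Prec := (model_theory_iff.1 h).1

theorem isUpperSet_cutSet (a : M) : IsUpperSet (cutSet a) := (model_theory_iff.1 h).2.1 a

theorem cutSet_subset_of_prec {a b : M} (hab : Prec a b) : cutSet b ⊆ cutSet a :=
  (model_theory_iff.1 h).2.2.1 a b hab

theorem exists_max_cutSet {r s : ℝ} (hrs : r < s)
    (hM : ((2 * ratIdx r s + 2 : ℕ) : Cardinal) ≤ #M) :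
    ∃ x : M, s ∈ cutSet x ∧ r ∉ cutSet x ∧ ∀ y, s ∈ cutSet y → ¬ Prec x y :=
  (model_theory_iff.1 h).2.2.2 r s hrs hM

theorem exists_cutSet_eq_Ici {s : ℝ}
    (hM : ∀ r < s, ((2 * ratIdx r s + 2 : ℕ) : Cardinal) ≤ #M) : ∃ x : M, cutSet x = Ici s := by
  obtain ⟨x, hsx, -, hxmax⟩ := exists_max_cutSet (sub_one_lt s) (hM _ (sub_one_lt s))
  refine ⟨x, Subset.antisymm (fun r hrx => mem_Ici.2 (not_lt.1 fun hrs => ?_))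
    ((isUpperSet_cutSet x).Ici_subset hsx)⟩
  obtain ⟨y, hsy, hry, hymax⟩ := exists_max_cutSet hrs (hM r hrs)
  -- the `≺`-largest element whose cut contains `s` is unique
  have hxy : x = y := Std.Trichotomous.trichotomous x y (hxmax y hsy) (hymax x hsx)
  exact hry (hxy ▸ hrx)

theorem exists_cutSet_eq_Ici_ratSeq {k : ℕ} (hk : ((2 * k + 2 : ℕ) : Cardinal) ≤ #M) :
    ∃ x : M, cutSet x = Ici (ratSeq k) :=
  exists_cutSet_eq_Ici fun _ hr =>
    le_trans (Nat.cast_le.2 (by have := ratIdx_le ⟨hr, le_rfl⟩; omega)) hk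

end Model

theorem continuum_le_mk {M : Type} [lang.Structure M] [M ⊨ theory] [Infinite M] : 𝔠 ≤ #M := by
  choose f hf using fun s : ℝ =>
    exists_cutSet_eq_Ici (M := M) (s := s) fun _ _ => natCast_lt_aleph0.le.trans (aleph0_le_mk M)
  rw [← mk_real]
  exact mk_le_of_injective (f := f) fun s t hst => Ici_injective (by rw [← hf, ← hf, hst])

section OfCuts

variable {X : Type*}

def cutLT (d : X → Set ℝ) (tb : X → X → Prop) (x y : X) : Prop :=
  d y ⊂ d x ∨ d x = d y ∧ tb x y

theorem subset_of_cutLT {d : X → Set ℝ} {tb : X → X → Prop} {x y : X} (h : cutLT d tb x y) :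
    d y ⊆ d x :=
  h.elim (·.subset) (·.1.ge)

theorem isStrictTotalOrder_cutLT {d : X → Set ℝ} (hd : ∀ x, IsUpperSet (d x))
    (tb : X → X → Prop) [IsTrans X tb] [Std.Irrefl tb] [Std.Trichotomous tb] :
    IsStrictTotalOrder X (cutLT d tb) := by
  refine (isStrictTotalOrder_iff _).2 ⟨?_, ?_, fun x y => ?_⟩
  · rintro x y z (hxy | ⟨hxy, hxy'⟩) (hyz | ⟨hyz, hyz'⟩)
    · exact .inl (hyz.trans hxy)
    · exact .inl (hyz ▸ hxy)
    · exact .inl (hxy ▸ hyz)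
    · exact .inr ⟨hxy.trans hyz, _root_.trans hxy' hyz'⟩
  · rintro x (h | ⟨-, h⟩)
    exacts [h.ne rfl, irrefl x h]
  · by_cases hd' : d x = d y
    · exact (trichotomous_of tb x y).imp (.inr ⟨hd', ·⟩) (·.imp_right (.inr ⟨hd'.symm, ·⟩))
    · rcases (hd x).total (hd y) with hxy | hxy
      · exact .inr (.inr (.inl (hxy.ssubset_of_ne hd')))
      · exact .inl (.inl (hxy.ssubset_of_ne (Ne.symm hd')))

theorem cutLT_iff {d : X → Set ℝ} {lt : X → X → Prop} [IsStrictTotalOrder X lt]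
    (hd : ∀ x y, lt x y → d y ⊆ d x) {x y : X} : cutLT d lt x y ↔ lt x y := by
  refine ⟨fun hxy => ?_, fun hxy => ?_⟩
  · rcases hxy with hss | ⟨-, hxy⟩
    · rcases trichotomous_of lt x y with hxy | rfl | hyx
      exacts [hxy, absurd hss (ssubset_irrefl _), absurd (hd _ _ hyx) hss.not_subset]
    · exact hxy
  · rcases eq_or_ssubset_of_subset (hd _ _ hxy) with heq | hss
    exacts [.inr ⟨heq.symm, hxy⟩, .inl hss]

theorem model_ofCuts [Fintype X] (lt : X → X → Prop) [IsStrictTotalOrder X lt] (d : X → Set ℝ)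
    (hup : ∀ x, IsUpperSet (d x)) (hanti : ∀ x y, lt x y → d y ⊆ d x)
    (hpin : ∀ k, 2 * k + 2 ≤ Fintype.card X → ∃ x, d x = Ici (ratSeq k)) :
    letI := ofCuts lt d; X ⊨ theory := by
  let := ofCuts lt d
  refine model_theory_iff.2 ⟨‹_›, hup, hanti, fun r s hrs hcard => ?_⟩
  rw [mk_fintype, Nat.cast_le] at hcard
  obtain ⟨p, hp⟩ := hpin _ hcard
  have hsp : s ∈ d p := hp ▸ (ratSeq_ratIdx_mem hrs).2
  obtain ⟨m, hsm, hmax⟩ :=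
    (Finite.wellFounded_of_trans_of_irrefl (Function.swap lt)).has_min {x | s ∈ d x} ⟨p, hsp⟩
  refine ⟨m, hsm, fun hrm => ?_, hmax⟩
  -- `m` lies above `p`, whose cut `[q k, ∞)` with `k = ratIdx r s` misses `r`
  have hmp : d m ⊆ d p := by
    rcases trichotomous_of lt p m with hpm | rfl | hmp
    exacts [hanti _ _ hpm, subset_rfl, absurd hmp (hmax p hsp)]
  have hrp := hmp hrm
  rw [hp] at hrp
  exact (ratSeq_ratIdx_mem hrs).1.not_ge hrp

end OfCuts

section Transfer

variable {A B C : Type*} [lang.Structure B] [lang.Structure C]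

def embeddingOfPrecCut [lang.Structure A] (f : A → B) (hf : Function.Injective f)
    (hprec : ∀ a b, Prec (f a) (f b) ↔ Prec a b) (hcut : ∀ a, cutSet (f a) = cutSet a) :
    A ↪[lang] B where
  toFun := f
  inj' := hf
  map_fun' f := Empty.elim f
  map_rel' {n} R x :=
    match n, R with
    | 1, r => by
      obtain ⟨a, rfl⟩ : ∃ a, x = ![a] := ⟨x 0, by ext i; fin_cases i; rfl⟩
      have hfa : f ∘ ![a] = ![f a] := by ext i; fin_cases i; rfl
      exact hfa ▸ Set.ext_iff.1 (hcut a) r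
    | 2, () => by
      obtain ⟨a, b, rfl⟩ : ∃ a b, x = ![a, b] := ⟨x 0, x 1, by ext i; fin_cases i <;> rfl⟩
      have hfab : f ∘ ![a, b] = ![f a, f b] := by ext i; fin_cases i <;> rfl
      exact hfab ▸ hprec a b

theorem realize_comp_iff_of_agree {α : Type*} (g : A → B) (h : A → C)
    (hg : Function.Injective g) (hh : Function.Injective h)
    (hprec : ∀ a b, Prec (g a) (g b) ↔ Prec (h a) (h b)) (hcut : ∀ a, cutSet (g a) = cutSet (h a))
    {φ : lang.Formula α} (hφ : φ.IsQF) (v : α → A) :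
    φ.Realize (g ∘ v) ↔ φ.Realize (h ∘ v) := by
  let := ofCuts (fun a b => Prec (h a) (h b)) (fun a => cutSet (h a))
  have hg' := hφ.realize_embedding (embeddingOfPrecCut g hg hprec hcut) (v := v) (xs := default)
  have hh' := hφ.realize_embedding (embeddingOfPrecCut h hh (fun _ _ => Iff.rfl) (fun _ => rfl))
    (v := v) (xs := default)
  simp only [Subsingleton.elim (_ ∘ default) default] at hg' hh'
  exact hg'.trans hh'.symm

end Transfer

section Extension

variable {M : Type*} [lang.Structure M] [M ⊨ theory] (S : Finset M) (b p : ℕ)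

def extCut : S ⊕ Fin p → Set ℝ :=
  Sum.elim (fun a => cutSet a.1) fun t => Ici (ratSeq (b + t))

abbrev extStructure : lang.Structure (S ⊕ Fin p) :=
  ofCuts (cutLT (extCut S b p) (Sum.Lex (Subrel Prec (· ∈ S)) (· < ·))) (extCut S b p)

theorem isUpperSet_extCut (x : S ⊕ Fin p) : IsUpperSet (extCut S b p x) := by
  rcases x with a | t
  exacts [isUpperSet_cutSet a.1, isUpperSet_Ici _]

theorem model_extStructure (hpin : ∀ k, 2 * k + 2 ≤ S.card + p →
      (∃ a ∈ S, cutSet a = Ici (ratSeq k)) ∨ b ≤ k ∧ k < b + p) :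
    letI := extStructure S b p; (S ⊕ Fin p) ⊨ theory := by
  have := isStrictTotalOrder_cutLT (isUpperSet_extCut S b p)
    (Sum.Lex (Subrel Prec (· ∈ S)) (· < ·))
  refine model_ofCuts _ _ (isUpperSet_extCut S b p) (fun _ _ => subset_of_cutLT) fun k hk => ?_
  rw [Fintype.card_sum, Fintype.card_coe, Fintype.card_fin] at hk
  rcases hpin k hk with ⟨a, ha, hcut⟩ | ⟨hbk, hkp⟩
  · exact ⟨.inl ⟨a, ha⟩, hcut⟩
  · exact ⟨.inr ⟨k - b, by omega⟩, by simp [extCut, Nat.add_sub_cancel' hbk]⟩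

theorem realize_extStructure_inl {α : Type*} {φ : lang.Formula α} (hφ : φ.IsQF) (v : α → S) :
    (letI := extStructure S b p; φ.Realize (Sum.inl ∘ v : α → S ⊕ Fin p)) ↔
      φ.Realize (Subtype.val ∘ v) := by
  let := extStructure S b p
  refine realize_comp_iff_of_agree _ _ Sum.inl_injective Subtype.val_injective (fun x y => ?_)
    (fun _ => rfl) hφ v
  change cutLT (extCut S b p) (Sum.Lex (Subrel Prec (· ∈ S)) (· < ·)) (.inl x) (.inl y) ↔ _
  rw [cutLT, Sum.lex_inl_inl]
  exact cutLT_iff (d := cutSet) (lt := Prec) (x := x.1) (y := y.1)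
    fun _ _ => cutSet_subset_of_prec

end Extension

theorem stablyFinite_theory : StablyFiniteT lang theory := by
  intro φ hφ M _ hM v hv
  by_cases hfin : Finite M
  · exact ⟨M, _, hM, hfin, le_rfl, v, hv⟩
  have : M ⊨ theory := hM
  have : Infinite M := not_finite_iff_infinite.1 hfin
  classical
  set F := φ.freeVarFinset
  let S := (insert 0 F).image v
  let w : ℕ → S := fun i => ⟨v (if i ∈ F then i else 0), Finset.mem_image_of_mem v <| by
    split_ifs with hi
    exacts [Finset.mem_insert_of_mem hi, Finset.mem_insert_self 0 F]⟩
  have hw : φ.Realize (Subtype.val ∘ w) :=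
    (Formula.realize_iff_of_eqOn fun i hi => by simp [w, show i ∈ F from hi]).1 hv
  exact ⟨S ⊕ Fin S.card, extStructure S 0 S.card,
    model_extStructure S 0 _ fun k hk => .inr ⟨k.zero_le, by omega⟩, inferInstance,
    (lt_aleph0_of_finite _).le.trans (aleph0_le_mk M), Sum.inl ∘ w,
    (realize_extStructure_inl S 0 _ hφ w).2 hw⟩

theorem finitelySmooth_theory : FinitelySmoothT lang theory := by
  intro φ hφ M _ hM v hv κ hκ
  have : M ⊨ theory := hM
  have : Finite M := lt_aleph0_iff_finite.1 (hκ.trans_lt natCast_lt_aleph0)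
  have := Fintype.ofFinite M
  set n := Fintype.card M
  have hn : n ≤ κ := by rwa [mk_fintype, Nat.cast_le] at hκ
  -- `M` already has the elements with cut `[q k, ∞)` for `2k + 2 ≤ n`; the others have `n/2 ≤ k`
  refine ⟨_ ⊕ Fin (κ - n), extStructure Finset.univ (n / 2) (κ - n),
    model_extStructure _ _ _ fun k hk => ?_, ?_, Sum.inl ∘ fun i => ⟨v i, Finset.mem_univ _⟩,
    (realize_extStructure_inl _ _ _ hφ _).2 hv⟩
  · rw [Finset.card_univ] at hk
    by_cases hkn : 2 * k + 2 ≤ n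
    · obtain ⟨x, hx⟩ := exists_cutSet_eq_Ici_ratSeq (M := M) (by rwa [mk_fintype, Nat.cast_le])
      exact .inl ⟨x, Finset.mem_univ x, hx⟩
    · exact .inr ⟨by omega, by omega⟩
  · simp only [mk_fintype, Fintype.card_sum, Fintype.card_coe, Finset.card_univ, Fintype.card_fin]
    norm_cast
    omega

theorem not_smooth_theory : ¬ SmoothT lang theory := by
  intro hsmooth
  have hunit : letI := ofCuts (· < ·) fun _ : Unit => (∅ : Set ℝ); Unit ⊨ theory :=
    model_ofCuts _ _ (fun _ => isUpperSet_empty) (fun _ _ _ => subset_rfl) fun k hk => by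
      simp at hk
  obtain ⟨N, _, hN, hcard, -⟩ :=
    hsmooth ⊤ BoundedFormula.IsQF.top Unit _ hunit default (by simp [RealizeIn]) ℵ₀ (by simp)
  have : N ⊨ theory := hN
  have : Infinite N := infinite_iff.2 hcard.ge
  exact (continuum_le_mk (M := N)).not_gt (hcard ▸ aleph0_lt_continuum)

end RealCuts

end

/-- There exist a one-sorted first-order language `L` and an `L`-theory `T` such that `T`
is stably finite and finitely smooth, but not smooth. -/
theorem stmt_17 :
    ∃ (L : FirstOrder.Language.{0, 0}) (T : L.Theory),
      StablyFiniteT L T ∧ FinitelySmoothT L T ∧ ¬ SmoothT L T :=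
  ⟨RealCuts.lang, RealCuts.theory, RealCuts.stablyFinite_theory, RealCuts.finitelySmooth_theory,
    RealCuts.not_smooth_theory⟩
end

section
/- Let L be a one-sorted first-order language, let C be a class of finite L-structures, and let T be the L-theory axiomatized by the set of all L-sentences that are true in every member of C. Then T is stably finite: for every quantifier-free L-formula φ and every model A of T with a valuation satisfying φ, there is a model B of T with a valuation satisfying φ such that B is finite and |B| ≤ |A|. -/
/-! If `A` is finite, take `B = A`. Otherwise `A` satisfies the existential closure of `φ`
together with "the domain is nonempty"; the negation of this sentence is then not in `T`, so
the sentence holds in some member of `C`. That member is finite, hence no larger than `A`, is a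
model of `T`, and carries a valuation satisfying `φ`. -/

open FirstOrder FirstOrder.Language

universe u v

/-- The sentence `σ` holds in `M`, with the structure instance given explicitly. -/
def SentHolds (L : FirstOrder.Language.{u, v}) (M : Type) (inst : L.Structure M)
    (σ : L.Sentence) : Prop :=
  letI := inst
  M ⊨ σ

namespace FirstOrder.Language

variable {L : Language.{u, v}} {M : Type*} [L.Structure M]

theorem Formula.realize_exClosure_iff_exists [Nonempty M] {α : Type*} [DecidableEq α]
    (φ : L.Formula α) : M ⊨ φ.exClosure ↔ ∃ v : α → M, φ.Realize v := by
  rw [Formula.realize_exClosure]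
  constructor
  · rintro ⟨v, hv⟩
    let v' : α → M := fun a => if h : a ∈ φ.freeVarFinset then v ⟨a, h⟩ else Classical.arbitrary M
    exact ⟨v', (BoundedFormula.realize_restrictFreeVar v' fun a => by simp [v']).1 hv⟩
  · rintro ⟨v, hv⟩
    exact ⟨fun a => v a, (BoundedFormula.realize_restrictFreeVar (f := id) v fun _ => rfl).2 hv⟩

theorem Sentence.realize_cardGe_one_iff : M ⊨ Sentence.cardGe L 1 ↔ Nonempty M := by
  rw [Sentence.realize_cardGe, Nat.cast_one, Cardinal.one_le_iff_ne_zero, Cardinal.mk_ne_zero_iff]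

variable (L : Language.{u, v})

def theoryOfClass (C : ∀ M : Type, L.Structure M → Prop) : L.Theory :=
  {σ | ∀ (M : Type) (inst : L.Structure M), C M inst → SentHolds L M inst σ}

variable {L} {C : ∀ M : Type, L.Structure M → Prop}

theorem modelsT_theoryOfClass {N : Type} {inst : L.Structure N} (hC : C N inst) :
    ModelsT L (L.theoryOfClass C) N inst :=
  letI := inst
  Theory.model_iff _ |>.2 fun _ hσ => hσ N inst hC

theorem exists_mem_realize_of_model_theoryOfClass {M : Type} [L.Structure M]
    [M ⊨ L.theoryOfClass C] {σ : L.Sentence} (h : M ⊨ σ) :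
    ∃ (N : Type) (inst : L.Structure N), C N inst ∧ SentHolds L N inst σ := by
  by_contra! hnone
  have hnot : σ.not ∈ L.theoryOfClass C := fun N inst hC =>
    letI := inst
    (Sentence.realize_not N).2 (hnone N inst hC)
  exact (Sentence.realize_not M).1 (Theory.realize_sentence_of_mem _ hnot) h

end FirstOrder.Language

/-- Let `C` be a class of finite `L`-structures and let `T` be the theory axiomatized by
the set of all `L`-sentences true in every member of `C`. Then `T` is stably finite. -/
theorem stmt_18 (L : FirstOrder.Language.{u, v})
    (C : ∀ (M : Type), L.Structure M → Prop)
    (hfin : ∀ (M : Type) (inst : L.Structure M), C M inst → Finite M)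
    (T : L.Theory)
    (hT : T = {σ : L.Sentence | ∀ (M : Type) (inst : L.Structure M), C M inst →
      SentHolds L M inst σ}) :
    StablyFiniteT L T := by
  subst hT
  intro φ _ M inst hM v hv
  rcases finite_or_infinite M with hM_fin | hM_inf
  · exact ⟨M, inst, hM, hM_fin, le_rfl, v, hv⟩
  let := inst
  have : M ⊨ L.theoryOfClass C := hM
  have hMσ : M ⊨ φ.exClosure ⊓ Sentence.cardGe L 1 :=
    Formula.realize_inf.2 ⟨(φ.realize_exClosure_iff_exists).2 ⟨v, hv⟩,
      Sentence.realize_cardGe_one_iff.2 inferInstance⟩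
  obtain ⟨N, instN, hC, hNσ⟩ := exists_mem_realize_of_model_theoryOfClass (C := C) hMσ
  let := instN
  obtain ⟨hNφ, hN_ne⟩ := Formula.realize_inf.1 hNσ
  have : Nonempty N := Sentence.realize_cardGe_one_iff.1 hN_ne
  have : Finite N := hfin N instN hC
  obtain ⟨w, hw⟩ := (φ.realize_exClosure_iff_exists).1 hNφ
  exact ⟨N, instN, modelsT_theoryOfClass hC, ‹_›,
    (Cardinal.lt_aleph0_of_finite N).le.trans (Cardinal.aleph0_le_mk M), w, hw⟩
end
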